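/- arXiv:1702.00039 — 5 statements merged into one kernel-verified Lean document; each statement's English description precedes it below -/
import Mathlib

section
/- The ℤ-module morphism d: H → H determined by d(v) = v⁻¹ and d(h_x) = (h_{x⁻¹})⁻¹ for all x ∈ W is a ring homomorphism. -/
open LaurentPolynomial

/-- The Bruhat order on a Coxeter group: `y ≤ x` if some subword of some (equivalently,
every) reduced word for `x` is a reduced word for `y`. -/
def CoxeterSystem.bruhatLE {B W : Type*} [Group W] {M : CoxeterMatrix B}
    (cs : CoxeterSystem M W) (y x : W) : Prop :=
  ∃ ω : List B, cs.IsReduced ω ∧ cs.wordProd ω = x ∧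
    ∃ ω' : List B, ω'.Sublist ω ∧ cs.IsReduced ω' ∧ cs.wordProd ω' = y

/-- The strict Bruhat order. -/
def CoxeterSystem.bruhatLT {B W : Type*} [Group W] {M : CoxeterMatrix B}
    (cs : CoxeterSystem M W) (y x : W) : Prop :=
  cs.bruhatLE y x ∧ y ≠ x

/-- Membership in `v·ℤ[v] ⊆ ℤ[v, v⁻¹]`, where `v = T 1`. -/
def MemVZv (p : LaurentPolynomial ℤ) : Prop :=
  ∃ q : Polynomial ℤ, p = q.toLaurent * T 1

/-!
The family `ȟₓ = (h_{x⁻¹})⁻¹` obeys the multiplication rules of the standard basis with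
`v⁻¹ - v` replaced by its image `v - v⁻¹` under `v ↦ v⁻¹`: inverting `hₓ h_s = h_{xs}`
(valid when `ℓ(xs) > ℓ(x)`) gives `ȟ_s ȟₓ = ȟ_{sx}`, and the quadratic relation
`h_s² = 1 + (v⁻¹ - v) h_s` inverts to `ȟ_s² = 1 + (v - v⁻¹) ȟ_s`. A map that is semilinear over
`v ↦ v⁻¹` and carries a basis obeying these rules to a family obeying the transformed rules is
multiplicative: `d(h_s a) = d(h_s) d(a)` is checked on the basis, where it is exactly the rules,
and `hₓ` is a product of `h_s` along a reduced word.
-/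

open scoped Ring

theorem Module.Basis.map_smul_of_map_smul_basis {ι R S M N : Type*} [Semiring R] [Semiring S]
    [AddCommMonoid M] [Module R M] [AddCommMonoid N] [Module S N] (b : Module.Basis ι R M)
    (σ : R →+* S) (f : M →+ N) (hf : ∀ (p : R) (i : ι), f (p • b i) = σ p • f (b i))
    (p : R) (a : M) : f (p • a) = σ p • f a := by
  induction b.mem_span a using Submodule.span_induction generalizing p with
  | mem a ha =>
    obtain ⟨i, rfl⟩ := ha
    exact hf p i
  | zero => simp
  | add a₁ a₂ _ _ ih₁ ih₂ => rw [smul_add, map_add, ih₁, ih₂, map_add, smul_add]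
  | smul q a _ ih => rw [smul_smul, ih, map_mul, mul_smul, ih]

section QuadraticRelation

variable {R A : Type*} [CommRing R] [Ring A] [Algebra R A] {u : A} {c : R}

theorem isUnit_of_mul_self_eq_one_add_smul (hu : u * u = 1 + c • u) : IsUnit u :=
  ⟨⟨u, u - c • 1, by rw [mul_sub, hu, mul_smul_comm, mul_one, add_sub_cancel_right],
    by rw [sub_mul, hu, smul_mul_assoc, one_mul, add_sub_cancel_right]⟩, rfl⟩

theorem Ring.inverse_of_mul_self_eq_one_add_smul (hu : u * u = 1 + c • u) : u⁻¹ʳ = u - c • 1 := by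
  rw [← mul_one u⁻¹ʳ, Ring.inverse_mul_eq_iff_eq_mul _ _ _ (isUnit_of_mul_self_eq_one_add_smul hu),
    mul_sub, hu, mul_smul_comm, mul_one, add_sub_cancel_right]

theorem Ring.inverse_mul_self_of_mul_self_eq_one_add_smul (hu : u * u = 1 + c • u) :
    u⁻¹ʳ * u⁻¹ʳ = 1 + (-c) • u⁻¹ʳ := by
  rw [Ring.inverse_of_mul_self_eq_one_add_smul hu]
  simp only [sub_mul, mul_sub, hu, smul_mul_assoc, mul_smul_comm, one_mul, mul_one, smul_sub,
    smul_smul, neg_mul, neg_smul]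
  abel

end QuadraticRelation

namespace CoxeterSystem

variable {B W : Type*} [Group W] {M : CoxeterMatrix B} (cs : CoxeterSystem M W)

theorem reduced_induction_left {p : W → Prop} (w : W) (one : p 1)
    (simple_mul : ∀ (w : W) (i : B), cs.length w < cs.length (cs.simple i * w) → p w →
      p (cs.simple i * w)) : p w := by
  induction hn : cs.length w using Nat.strong_induction_on generalizing w with
  | _ n ih =>
    by_cases hw : w = 1
    · exact hw ▸ one
    obtain ⟨i, hi⟩ := cs.exists_leftDescent_of_ne_one hw
    have hw' : cs.simple i * (cs.simple i * w) = w := by simp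
    rw [← hw']
    exact simple_mul _ i (by rwa [hw']) (ih _ (hn ▸ hi) _ rfl)

theorem length_lt_of_length_simple_mul_mul_simple {w : W} {i j : B}
    (hj : cs.length w < cs.length (cs.simple j * w))
    (hi : cs.length (cs.simple j * w) < cs.length (cs.simple j * w * cs.simple i)) :
    cs.length w < cs.length (w * cs.simple i) ∧
      cs.length (w * cs.simple i) < cs.length (cs.simple j * (w * cs.simple i)) := by
  rw [← mul_assoc]
  rcases cs.length_simple_mul w j with h₁ | h₁ <;>
    rcases cs.length_mul_simple (cs.simple j * w) i with h₂ | h₂ <;>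
    rcases cs.length_mul_simple w i with h₃ | h₃ <;>
    rcases cs.length_simple_mul (w * cs.simple i) j with h₄ | h₄ <;>
    simp only [← mul_assoc] at h₄ <;> omega

end CoxeterSystem

section HeckeFamily

variable {B W : Type*} [Group W] {M : CoxeterMatrix B} {R A : Type*} [CommRing R] [Ring A]
  [Algebra R A]

/-- The multiplication rules of the standard basis of a Hecke algebra, with `c` in place of
`v⁻¹ - v`. -/
structure IsHeckeFamily (cs : CoxeterSystem M W) (c : R) (h : W → A) : Prop where
  map_one : h 1 = 1
  simple_mul_of_length_lt : ∀ (i : B) (x : W), cs.length x < cs.length (cs.simple i * x) →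
    h (cs.simple i) * h x = h (cs.simple i * x)
  simple_mul_of_isLeftDescent : ∀ (i : B) (x : W), cs.IsLeftDescent x i →
    h (cs.simple i) * h x = h (cs.simple i * x) + c • h x

namespace IsHeckeFamily

variable {cs : CoxeterSystem M W} {c : R} {h : W → A}

theorem simple_mul_self (hh : IsHeckeFamily cs c h) (i : B) :
    h (cs.simple i) * h (cs.simple i) = 1 + c • h (cs.simple i) := by
  have hi : cs.IsLeftDescent (cs.simple i) i := by simp [CoxeterSystem.IsLeftDescent]
  rw [hh.simple_mul_of_isLeftDescent i _ hi, cs.simple_mul_simple_self, hh.map_one]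

theorem of_simple_mul_self (map_one : h 1 = 1)
    (simple_mul_of_length_lt : ∀ (i : B) (x : W), cs.length x < cs.length (cs.simple i * x) →
      h (cs.simple i) * h x = h (cs.simple i * x))
    (simple_mul_self : ∀ i : B, h (cs.simple i) * h (cs.simple i) = 1 + c • h (cs.simple i)) :
    IsHeckeFamily cs c h where
  map_one := map_one
  simple_mul_of_length_lt := simple_mul_of_length_lt
  simple_mul_of_isLeftDescent i x hx := by
    have hx' : cs.simple i * (cs.simple i * x) = x := by simp
    have hlt : cs.length (cs.simple i * x) < cs.length (cs.simple i * (cs.simple i * x)) := by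
      rwa [hx']
    conv_lhs => rw [← hx', ← simple_mul_of_length_lt i _ hlt, ← mul_assoc, simple_mul_self,
      add_mul, one_mul, smul_mul_assoc, simple_mul_of_length_lt i _ hlt, hx']

theorem mul_simple_of_length_lt (hh : IsHeckeFamily cs c h) {x : W} {i : B}
    (hx : cs.length x < cs.length (x * cs.simple i)) :
    h x * h (cs.simple i) = h (x * cs.simple i) := by
  induction x using cs.reduced_induction_left with
  | one => rw [hh.map_one, one_mul, one_mul]
  | simple_mul x j hj ih =>
    obtain ⟨hxi, hjxi⟩ := cs.length_lt_of_length_simple_mul_mul_simple hj hx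
    rw [← hh.simple_mul_of_length_lt j x hj, mul_assoc, ih hxi,
      hh.simple_mul_of_length_lt j _ hjxi, mul_assoc]

theorem isUnit_simple (hh : IsHeckeFamily cs c h) (i : B) : IsUnit (h (cs.simple i)) :=
  isUnit_of_mul_self_eq_one_add_smul (hh.simple_mul_self i)

noncomputable def dual (h : W → A) (x : W) : A := (h x⁻¹)⁻¹ʳ

theorem isHeckeFamily_dual (hh : IsHeckeFamily cs c h) : IsHeckeFamily cs (-c) (dual h) := by
  refine of_simple_mul_self (by simp [dual, hh.map_one]) (fun i x hx => ?_) (fun i => ?_)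
  · have hx' : cs.length x⁻¹ < cs.length (x⁻¹ * cs.simple i) := by
      rwa [← cs.inv_simple, ← mul_inv_rev, cs.length_inv, cs.length_inv]
    simp only [dual, mul_inv_rev, cs.inv_simple, ← hh.mul_simple_of_length_lt hx',
      Ring.inverse_mul (.inr (hh.isUnit_simple i))]
  · simpa only [dual, cs.inv_simple] using
      Ring.inverse_mul_self_of_mul_self_eq_one_add_smul (hh.simple_mul_self i)

variable {σ : R →+* R} {b : Module.Basis W R A} {h' : W → A} {d : A →ₛₗ[σ] A}

theorem map_simple_mul_basis (hb : IsHeckeFamily cs c b) (hh' : IsHeckeFamily cs (σ c) h')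
    (hd : ∀ x, d (b x) = h' x) (i : B) (y : W) :
    d (b (cs.simple i) * b y) = h' (cs.simple i) * h' y := by
  by_cases hy : cs.IsLeftDescent y i
  · rw [hb.simple_mul_of_isLeftDescent i y hy, map_add, map_smulₛₗ, hd, hd,
      hh'.simple_mul_of_isLeftDescent i y hy]
  · have hlt : cs.length y < cs.length (cs.simple i * y) := by
      rw [cs.not_isLeftDescent_iff] at hy; omega
    rw [hb.simple_mul_of_length_lt i y hlt, hd, hh'.simple_mul_of_length_lt i y hlt]

theorem map_simple_mul (hb : IsHeckeFamily cs c b) (hh' : IsHeckeFamily cs (σ c) h')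
    (hd : ∀ x, d (b x) = h' x) (i : B) (a : A) :
    d (b (cs.simple i) * a) = h' (cs.simple i) * d a := by
  have key : d ∘ₛₗ LinearMap.mulLeft R (b (cs.simple i)) =
      LinearMap.mulLeft R (h' (cs.simple i)) ∘ₛₗ d :=
    b.ext fun y => by simpa [hd] using hb.map_simple_mul_basis hh' hd i y
  exact LinearMap.congr_fun key a

theorem map_basis_mul (hb : IsHeckeFamily cs c b) (hh' : IsHeckeFamily cs (σ c) h')
    (hd : ∀ x, d (b x) = h' x) (x : W) (a : A) : d (b x * a) = h' x * d a := by
  induction x using cs.reduced_induction_left with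
  | one => rw [hb.map_one, hh'.map_one, one_mul, one_mul]
  | simple_mul x i hi ih =>
    rw [← hb.simple_mul_of_length_lt i x hi, mul_assoc, hb.map_simple_mul hh' hd, ih,
      ← mul_assoc, hh'.simple_mul_of_length_lt i x hi]

theorem map_mul (hb : IsHeckeFamily cs c b) (hh' : IsHeckeFamily cs (σ c) h')
    (hd : ∀ x, d (b x) = h' x) (a₁ a₂ : A) : d (a₁ * a₂) = d a₁ * d a₂ := by
  have key : d ∘ₛₗ LinearMap.mulRight R a₂ = LinearMap.mulRight R (d a₂) ∘ₛₗ d :=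
    b.ext fun x => by simpa [hd] using hb.map_basis_mul hh' hd x a₂
  exact LinearMap.congr_fun key a₁

end IsHeckeFamily

end HeckeFamily

/-- The `ℤ`-module morphism `d : H → H` determined by `d(v) = v⁻¹` and
`d(hₓ) = (h_{x⁻¹})⁻¹` for all `x ∈ W` (i.e. `d(p·hₓ) = p(v⁻¹)·(h_{x⁻¹})⁻¹` for
`p ∈ ℤ[v,v⁻¹]`) is a ring homomorphism. -/
theorem hecke_duality_is_ring_hom {B W : Type*} [Group W] {M : CoxeterMatrix B} (cs : CoxeterSystem M W)
    {H : Type*} [Ring H] [Algebra (LaurentPolynomial ℤ) H]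
    -- `h` is the standard basis of the Hecke algebra `H` of `(W, S)` over `ℤ[v, v⁻¹]`,
    -- where `v` is the Laurent variable `T 1`
    (h : Module.Basis W (LaurentPolynomial ℤ) H) (h_one : h 1 = 1)
    -- the multiplication rules characterizing the Hecke algebra:
    -- `hₛ hₓ = h_{sx}` if `sx > x`, and `hₛ hₓ = h_{sx} + (v⁻¹ - v) hₓ` if `sx < x`
    (h_mul_gt : ∀ (i : B) (x : W), cs.length (cs.simple i * x) > cs.length x →
      h (cs.simple i) * h x = h (cs.simple i * x))
    (h_mul_lt : ∀ (i : B) (x : W), cs.length (cs.simple i * x) < cs.length x →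
      h (cs.simple i) * h x = h (cs.simple i * x) + ((T (-1) - T 1 : LaurentPolynomial ℤ)) • h x)
    (d : H →ₗ[ℤ] H)
    (hd : ∀ (p : LaurentPolynomial ℤ) (x : W),
      d (p • h x) = (invert p) • Ring.inverse (h (x⁻¹))) :
    d 1 = 1 ∧ ∀ a b : H, d (a * b) = d a * d b := by
  have hh : IsHeckeFamily cs (T (-1) - T 1 : ℤ[T;T⁻¹]) h := ⟨h_one, h_mul_gt, h_mul_lt⟩
  have hinvert : invert (T (-1) - T 1 : ℤ[T;T⁻¹]) = -(T (-1) - T 1) := by simp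
  have hdual : IsHeckeFamily cs (invert (T (-1) - T 1 : ℤ[T;T⁻¹])) (IsHeckeFamily.dual h) :=
    hinvert ▸ hh.isHeckeFamily_dual
  have hd_basis (x : W) : d (h x) = (h x⁻¹)⁻¹ʳ := by simpa using hd 1 x
  let dₛ : H →ₛₗ[((invert : ℤ[T;T⁻¹] ≃ₐ[ℤ] ℤ[T;T⁻¹]) : ℤ[T;T⁻¹] →+* ℤ[T;T⁻¹])] H :=
    { d with
      map_smul' := h.map_smul_of_map_smul_basis _ d.toAddMonoidHom fun p x => by
        simp [hd, hd_basis] }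
  refine ⟨?_, hh.map_mul (d := dₛ) hdual hd_basis⟩
  simpa [h_one] using hd_basis 1
end

section
/- For every x ∈ W there exists a self-dual element b_x ∈ H with b_x ∈ h_x + Σ_{y<x} vℤ[v]·h_y, where < is the Bruhat order. -/
open LaurentPolynomial

/-!
The elements `b_x` are built by induction on the length of `x`. If `s x < x`, then
`c = (h_s + v) b_{sx}` is self-dual, has coefficient `1` at `h_x`, and its other coefficients
lie in `ℤ[v]`; subtracting `∑ μ_z b_z`, where `μ_z` is the constant term of the coefficient of `c`
at `h_z` and `b_z` is already built for `z < x`, moves them into `vℤ[v]`. The support of `c`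
stays below `x` by the lifting property `z ≤ u < su ⟹ sz ≤ su` of the Bruhat order.

We work with the Bruhat order as the order generated by `t w < w` for reflections `t`, where
transitivity is free; it implies the subword order by the strong exchange condition, which comes
from Tits' sign-twisted conjugation action of `W` on `W × ℤ/2`.
-/

open scoped Polynomial

theorem Finset.sum_range_two_mul {G : Type*} [AddCommMonoid G] (f : ℕ → G) (n : ℕ) :
    ∑ c ∈ Finset.range (2 * n), f c = ∑ k ∈ Finset.range n, (f (2 * k) + f (2 * k + 1)) := by
  induction n with
  | zero => simp
  | succ n ih =>
    rw [Nat.mul_succ, Finset.sum_range_succ, Finset.sum_range_succ, ih, Finset.sum_range_succ,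
      add_assoc]

theorem Equiv.Perm.pow_apply_of_skew {α G : Type*} [AddCommMonoid G]
    (F : Equiv.Perm (α × G)) (g : α → α) (χ : α → G) (hF : ∀ a ε, F (a, ε) = (g a, ε + χ a))
    (n : ℕ) (a : α) (ε : G) :
    (F ^ n) (a, ε) = (g^[n] a, ε + ∑ k ∈ Finset.range n, χ (g^[k] a)) := by
  induction n with
  | zero => simp
  | succ n ih =>
    rw [pow_succ', Equiv.Perm.mul_apply, ih, hF, Function.iterate_succ_apply',
      Finset.sum_range_succ, add_assoc]

namespace CoxeterSystem

variable {B W : Type*} [Group W] {M : CoxeterMatrix B} (cs : CoxeterSystem M W)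

local prefix:100 "s" => cs.simple
local prefix:100 "π" => cs.wordProd
local prefix:100 "ℓ" => cs.length
local prefix:100 "ris" => cs.rightInvSeq

/-! ### Tits' representation and the strong exchange condition -/

theorem simple_mul_mul_simple_eq_simple_iff {i j : B} {w : W} :
    s j * w * s j = s i ↔ s i * s j * w = s j := by
  constructor
  · intro h
    rw [show w = s j * s i * s j by rw [← h]; simp [mul_assoc]]
    simp [mul_assoc]
  · intro h
    rw [eq_inv_mul_of_mul_eq h]
    simp [mul_assoc]

theorem simple_mul_pow_eq_inv_mul_simple (i j : B) (k : ℕ) :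
    s j * (s i * s j) ^ k = ((s i * s j) ^ k)⁻¹ * s j := by
  have : SemiconjBy (s j) (s i * s j) (s i * s j)⁻¹ := by
    simp [SemiconjBy, mul_assoc]
  rw [← inv_pow]
  exact (this.pow_right k).eq

theorem pow_mul_mul_inv_pow_eq_simple_iff (i j : B) (a k : ℕ) (w : W) :
    (s i * s j) ^ a * w * ((s i * s j) ^ k)⁻¹ = s j ↔ (s i * s j) ^ (k + a) * w = s j := by
  rw [mul_inv_eq_iff_eq_mul, simple_mul_pow_eq_inv_mul_simple, eq_inv_mul_iff_mul_eq, pow_add,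
    mul_assoc]

open scoped Classical in
noncomputable def titsPerm (i : B) : Equiv.Perm (W × ZMod 2) :=
  Function.Involutive.toPerm (fun p ↦ (s i * p.1 * s i, p.2 + if p.1 = s i then 1 else 0)) <| by
    rintro ⟨w, ε⟩
    simp only [simple_mul_mul_simple_eq_simple_iff, simple_mul_simple_self, one_mul,
      Prod.mk.injEq]
    refine ⟨by simp [mul_assoc], ?_⟩
    split_ifs <;> simp [add_assoc, CharTwo.add_self_eq_zero]

open scoped Classical in
theorem titsPerm_apply (i : B) (w : W) (ε : ZMod 2) :
    cs.titsPerm i (w, ε) = (s i * w * s i, ε + if w = s i then 1 else 0) := rfl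

theorem isLiftable_titsPerm : M.IsLiftable cs.titsPerm := by
  classical
  intro i j
  set P := s i * s j
  have hF : ∀ w ε, (cs.titsPerm i * cs.titsPerm j) (w, ε) = (P * w * P⁻¹, ε +
      ((if w = s j then 1 else 0) + if s j * w * s j = s i then 1 else 0)) := by
    intro w ε
    simp only [Equiv.Perm.mul_apply, titsPerm_apply, P, mul_inv_rev, inv_simple, mul_assoc,
      add_assoc]
  have hiter : ∀ (k : ℕ) w, (fun w ↦ P * w * P⁻¹)^[k] w = P ^ k * w * (P ^ k)⁻¹ := by
    intro k w
    induction k with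
    | zero => simp
    | succ k ih => rw [Function.iterate_succ_apply', ih]; simp [pow_succ', mul_assoc]
  ext ⟨w, ε⟩ : 1
  rw [Equiv.Perm.pow_apply_of_skew _ _ _ hF, hiter, cs.simple_mul_simple_pow]
  simp only [one_mul, inv_one, mul_one, Equiv.Perm.one_apply, Prod.mk.injEq, true_and,
    add_eq_left]
  -- The `k`-th step flips the sign iff `P ^ (2k) w = s j` or `P ^ (2k+1) w = s j`, and the
  -- condition `P ^ c w = s j` is periodic in `c` with period `M i j`.
  set f : ℕ → ZMod 2 := fun c ↦ if P ^ c * w = s j then 1 else 0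
  have hf : ∀ c, f (M i j + c) = f c := by
    intro c
    simp only [f, pow_add, cs.simple_mul_simple_pow, one_mul, P]
  calc _ = ∑ k ∈ Finset.range (M i j), (f (2 * k) + f (2 * k + 1)) := by
        refine Finset.sum_congr rfl fun k _ ↦ ?_
        rw [hiter, simple_mul_mul_simple_eq_simple_iff, show s i * s j = P from rfl]
        simp only [← mul_assoc, ← pow_succ']
        rw [pow_mul_mul_inv_pow_eq_simple_iff, pow_mul_mul_inv_pow_eq_simple_iff]
        simp only [f, two_mul, add_assoc]
        rfl
    _ = 0 := by
        rw [← Finset.sum_range_two_mul, two_mul, Finset.sum_range_add]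
        simp only [hf, CharTwo.add_self_eq_zero]

noncomputable def titsRep : W →* Equiv.Perm (W × ZMod 2) :=
  cs.lift ⟨cs.titsPerm, cs.isLiftable_titsPerm⟩

/-- Björner–Brenti's `η`: for any word `ω` of `z`, `titsCocycle z t` is the parity of the number
of occurrences of `t` in the right inversion sequence of `ω`. -/
noncomputable def titsCocycle (z w : W) : ZMod 2 := (cs.titsRep z (w, 0)).2

theorem titsRep_simple (i : B) : cs.titsRep (s i) = cs.titsPerm i :=
  cs.lift_apply_simple cs.isLiftable_titsPerm i

theorem titsRep_apply (z w : W) (ε : ZMod 2) :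
    cs.titsRep z (w, ε) = (z * w * z⁻¹, ε + cs.titsCocycle z w) := by
  induction z using cs.simple_induction_left generalizing w ε with
  | one => simp [titsCocycle]
  | mul_simple_left z i ih =>
    rw [titsCocycle, map_mul, Equiv.Perm.mul_apply, Equiv.Perm.mul_apply, ih, ih, titsRep_simple,
      titsPerm_apply, titsPerm_apply, zero_add, add_assoc, mul_inv_rev, inv_simple]
    simp only [mul_assoc]

theorem titsCocycle_mul (z₁ z₂ w : W) :
    cs.titsCocycle (z₁ * z₂) w = cs.titsCocycle z₂ w + cs.titsCocycle z₁ (z₂ * w * z₂⁻¹) := by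
  rw [titsCocycle, map_mul, Equiv.Perm.mul_apply, titsRep_apply, titsRep_apply, zero_add]

theorem titsCocycle_one (w : W) : cs.titsCocycle 1 w = 0 := by
  simp [titsCocycle]

open scoped Classical in
theorem titsCocycle_simple (i : B) (w : W) :
    cs.titsCocycle (s i) w = if w = s i then 1 else 0 := by
  simp [titsCocycle, titsRep_simple, titsPerm_apply]

theorem mem_rightInvSeq_of_titsCocycle_ne_zero {ω : List B} {t : W}
    (h : cs.titsCocycle (π ω) t ≠ 0) : t ∈ ris ω := by
  classical
  induction ω with
  | nil => simp [titsCocycle_one] at h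
  | cons i ω ih =>
    rw [wordProd_cons, titsCocycle_mul, titsCocycle_simple] at h
    rw [rightInvSeq, List.mem_cons]
    by_cases ht : cs.titsCocycle (π ω) t = 0
    · left
      rw [ht, zero_add, ite_ne_right_iff] at h
      rw [← h.1]
      group
    · exact Or.inr (ih ht)

theorem titsCocycle_eq_zero_of_not_isRightInversion {z t : W}
    (h : ¬cs.IsRightInversion z t) : cs.titsCocycle z t = 0 := by
  obtain ⟨ω, hω, rfl⟩ := cs.exists_isReduced z
  by_contra hne
  exact h <| cs.isRightInversion_of_mem_rightInvSeq hω <|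
    cs.mem_rightInvSeq_of_titsCocycle_ne_zero hne

theorem titsCocycle_self {t : W} (ht : cs.IsReflection t) : cs.titsCocycle t t = 1 := by
  obtain ⟨v, i, rfl⟩ := ht
  have h₁ := cs.titsCocycle_mul (v * s i) v⁻¹ (v * s i * v⁻¹)
  have h₂ := cs.titsCocycle_mul v (s i) (s i)
  have h₃ := cs.titsCocycle_mul v v⁻¹ (v * s i * v⁻¹)
  have hv : v⁻¹ * (v * s i * v⁻¹) * v = s i := by group
  simp only [inv_inv, hv, mul_inv_cancel, titsCocycle_one, titsCocycle_simple, if_true, inv_simple,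
    simple_mul_simple_self, one_mul] at h₁ h₂ h₃
  linear_combination h₁ + h₂ - h₃

theorem titsCocycle_eq_one_of_isRightInversion {z t : W} (h : cs.IsRightInversion z t) :
    cs.titsCocycle z t = 1 := by
  have hz : z * t * t = z := by rw [mul_assoc, h.1.mul_self, mul_one]
  have h₀ : cs.titsCocycle (z * t) t = 0 :=
    cs.titsCocycle_eq_zero_of_not_isRightInversion fun h' ↦
      lt_asymm h.2 (by simpa only [hz] using h'.2)
  have := cs.titsCocycle_mul (z * t) t t
  rwa [hz, h.1.mul_self, one_mul, h.1.inv, h₀, add_zero, cs.titsCocycle_self h.1] at this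

/-- The strong exchange condition. -/
theorem exists_wordProd_eraseIdx_eq_wordProd_mul {ω : List B} {t : W}
    (h : cs.IsRightInversion (π ω) t) : ∃ j < ω.length, π (ω.eraseIdx j) = π ω * t := by
  have ht : t ∈ ris ω := cs.mem_rightInvSeq_of_titsCocycle_ne_zero <| by
    rw [cs.titsCocycle_eq_one_of_isRightInversion h]; exact one_ne_zero
  obtain ⟨j, hj, rfl⟩ := List.mem_iff_getElem.mp ht
  refine ⟨j, by simpa using hj, ?_⟩
  rw [← cs.wordProd_mul_getD_rightInvSeq, List.getD_eq_getElem _ 1 hj]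

theorem exists_wordProd_eraseIdx_eq_mul_wordProd {ω : List B} {t : W}
    (h : cs.IsLeftInversion (π ω) t) : ∃ j < ω.length, π (ω.eraseIdx j) = t * π ω := by
  have hconj : π ω * ((π ω)⁻¹ * t * π ω) = t * π ω := by group
  have hinv : cs.IsRightInversion (π ω) ((π ω)⁻¹ * t * π ω) := by
    refine ⟨?_, ?_⟩
    · simpa using h.1.conj (π ω)⁻¹
    · rw [hconj]; exact h.2
  rw [← hconj]
  exact cs.exists_wordProd_eraseIdx_eq_wordProd_mul hinv

/-! ### The Bruhat order as a chain order -/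

def bruhatStep (a b : W) : Prop := ∃ t, cs.IsLeftInversion b t ∧ a = t * b

/-- The Bruhat order, generated by `t * b ≤ b` for the left inversions `t` of `b`. -/
def bruhatChainLE : W → W → Prop := Relation.ReflTransGen cs.bruhatStep

variable {cs}

theorem bruhatStep.length_lt {a b : W} (h : cs.bruhatStep a b) : ℓ a < ℓ b := by
  obtain ⟨t, ht, rfl⟩ := h
  exact ht.2

theorem bruhatStep.simple_mul {a b : W} (h : cs.bruhatStep a b) (i : B)
    (hlt : ℓ (s i * a) < ℓ (s i * b)) : cs.bruhatStep (s i * a) (s i * b) := by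
  obtain ⟨t, ht, rfl⟩ := h
  exact ⟨s i * t * s i, ⟨by simpa using ht.1.conj (s i), by simpa [mul_assoc] using hlt⟩,
    by simp [mul_assoc]⟩

theorem bruhatChainLE.trans {a b c : W} (hab : cs.bruhatChainLE a b)
    (hbc : cs.bruhatChainLE b c) : cs.bruhatChainLE a c :=
  Relation.ReflTransGen.trans hab hbc

theorem bruhatChainLE.length_le {a b : W} (h : cs.bruhatChainLE a b) : ℓ a ≤ ℓ b := by
  induction h with
  | refl => rfl
  | tail _ hstep ih => exact ih.trans hstep.length_lt.le

theorem bruhatChainLE.length_lt {a b : W} (h : cs.bruhatChainLE a b) (hne : a ≠ b) :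
    ℓ a < ℓ b := by
  obtain rfl | ⟨c, hac, hcb⟩ := h.cases_tail
  · exact absurd rfl hne
  · exact (bruhatChainLE.length_le hac).trans_lt hcb.length_lt

variable (cs)

theorem bruhatChainLE_refl (a : W) : cs.bruhatChainLE a a := Relation.ReflTransGen.refl

theorem bruhatChainLE_simple_mul_self {w : W} {i : B} (h : ℓ (s i * w) < ℓ w) :
    cs.bruhatChainLE (s i * w) w :=
  .single ⟨s i, ⟨cs.isReflection_simple i, h⟩, rfl⟩

theorem bruhatChainLE_self_simple_mul {w : W} {i : B} (h : ℓ w < ℓ (s i * w)) :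
    cs.bruhatChainLE w (s i * w) := by
  simpa using cs.bruhatChainLE_simple_mul_self (w := s i * w) (i := i) (by simpa using h)

theorem exists_sublist_wordProd_eq_of_bruhatChainLE {y x : W} (h : cs.bruhatChainLE y x) :
    ∀ ω : List B, π ω = x → ∃ τ : List B, τ.Sublist ω ∧ π τ = y := by
  induction h with
  | refl => exact fun ω hω ↦ ⟨ω, .refl ω, hω⟩
  | tail _ hstep ih =>
    rintro ω rfl
    obtain ⟨t, ht, rfl⟩ := hstep
    obtain ⟨j, -, hj⟩ := cs.exists_wordProd_eraseIdx_eq_mul_wordProd ht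
    obtain ⟨τ, hτ, rfl⟩ := ih _ hj
    exact ⟨τ, hτ.trans (List.eraseIdx_sublist ω j), rfl⟩

/-- The deletion condition. -/
theorem exists_isReduced_sublist (ω : List B) :
    ∃ τ : List B, τ.Sublist ω ∧ cs.IsReduced τ ∧ π τ = π ω := by
  induction ω with
  | nil => exact ⟨[], .slnil, by simp [IsReduced], rfl⟩
  | cons i ω ih =>
    obtain ⟨τ, hτω, hτ, hπ⟩ := ih
    rcases cs.length_simple_mul (π τ) i with hup | hdown
    · refine ⟨i :: τ, hτω.cons_cons i, ?_, by simp [wordProd_cons, hπ]⟩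
      rw [IsReduced, wordProd_cons, hup, hτ.eq, List.length_cons]
    · obtain ⟨j, hj, hπj⟩ := cs.exists_wordProd_eraseIdx_eq_mul_wordProd
        (⟨cs.isReflection_simple i, by omega⟩ : cs.IsLeftInversion (π τ) (s i))
      refine ⟨τ.eraseIdx j, ((List.eraseIdx_sublist τ j).trans hτω).cons i, ?_,
        by rw [hπj, hπ, wordProd_cons]⟩
      rw [IsReduced, hπj, List.length_eraseIdx_of_lt hj, ← hτ.eq]
      omega

theorem bruhatLE_of_bruhatChainLE {y x : W} (h : cs.bruhatChainLE y x) : cs.bruhatLE y x := by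
  obtain ⟨ω, hω, rfl⟩ := cs.exists_isReduced x
  obtain ⟨σ, hσω, rfl⟩ := cs.exists_sublist_wordProd_eq_of_bruhatChainLE h ω rfl
  obtain ⟨τ, hτσ, hτ, hπ⟩ := cs.exists_isReduced_sublist σ
  exact ⟨ω, hω, rfl, τ, hτσ.trans hσω, hτ, hπ⟩

theorem bruhatChainLE_simple_mul_of_bruhatStep {w z : W} {i : B} (hwz : cs.bruhatStep w z)
    (hz : ℓ (s i * z) < ℓ z) : cs.bruhatChainLE (s i * w) z := by
  obtain ⟨t, ht, rfl⟩ := hwz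
  obtain ⟨ρ, hρ, hρz⟩ := cs.exists_isReduced (s i * z)
  have hz' : z = π (i :: ρ) := by rw [wordProd_cons, ← hρz, simple_mul_simple_cancel_left]
  obtain ⟨j, hj, hπj⟩ := cs.exists_wordProd_eraseIdx_eq_mul_wordProd (hz' ▸ ht)
  rw [← hz'] at hπj
  cases j with
  | zero =>
    rw [List.eraseIdx_cons_zero, ← hρz] at hπj
    rw [← hπj, simple_mul_simple_cancel_left]
    exact cs.bruhatChainLE_refl z
  | succ k =>
    rw [List.eraseIdx_cons_succ, wordProd_cons, ← eq_inv_mul_iff_mul_eq, inv_simple] at hπj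
    have hlen : ℓ (s i * (t * z)) < ℓ (s i * z) := by
      have := cs.length_wordProd_le (ρ.eraseIdx k)
      rw [List.length_eraseIdx_of_lt (by simpa using hj)] at this
      have : 0 < ρ.length := by simp at hj; omega
      rw [← hπj, hρz, hρ.eq]
      omega
    exact .trans (.single (bruhatStep.simple_mul ⟨t, ht, rfl⟩ i hlen))
      (cs.bruhatChainLE_simple_mul_self hz)

variable {cs}

/-- The lifting property, in the two forms that are proved together along a chain. -/
theorem bruhatChainLE.lifting {y x : W} (h : cs.bruhatChainLE y x) {i : B}
    (hy : ℓ y < ℓ (s i * y)) :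
    (ℓ x < ℓ (s i * x) → cs.bruhatChainLE (s i * y) (s i * x)) ∧
      (ℓ (s i * x) < ℓ x → cs.bruhatChainLE (s i * y) x) := by
  induction h with
  | refl => exact ⟨fun _ ↦ cs.bruhatChainLE_refl _, fun hsy ↦ absurd hsy (by omega)⟩
  | @tail w x _ hwx ih =>
    have hx : cs.bruhatChainLE w x := .single hwx
    rcases cs.length_simple_mul w i with hw | hw
    · have hlen := hwx.length_lt
      exact ⟨fun hsx ↦ (ih.1 (by omega)).trans (.single (hwx.simple_mul i (by omega))),
        fun hsx ↦ (ih.1 (by omega)).trans (cs.bruhatChainLE_simple_mul_of_bruhatStep hwx hsx)⟩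
    · have hsw := ih.2 (by omega)
      exact ⟨fun hsx ↦ (hsw.trans hx).trans (cs.bruhatChainLE_self_simple_mul hsx),
        fun _ ↦ hsw.trans hx⟩

theorem bruhatChainLE.simple_mul_simple_mul {z u : W} (h : cs.bruhatChainLE z u) {i : B}
    (hu : ℓ u < ℓ (s i * u)) : cs.bruhatChainLE (s i * z) (s i * u) := by
  rcases cs.length_simple_mul z i with hz | hz
  · exact (h.lifting (by omega)).1 hu
  · exact ((cs.bruhatChainLE_simple_mul_self (by omega)).trans h).trans
      (cs.bruhatChainLE_self_simple_mul hu)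

end CoxeterSystem

/-! ### Kazhdan–Lusztig elements -/

noncomputable def Zv : Subring ℤ[T;T⁻¹] := (Polynomial.toLaurent : ℤ[X] →+* ℤ[T;T⁻¹]).range

noncomputable def vZv : Submodule ℤ[X] ℤ[T;T⁻¹] := Submodule.span ℤ[X] {T 1}

theorem memVZv_iff_mem_vZv {p : ℤ[T;T⁻¹]} : MemVZv p ↔ p ∈ vZv := by
  simp [MemVZv, vZv, Submodule.mem_span_singleton, Algebra.smul_def, eq_comm]

theorem mem_Zv_of_mem_vZv {p : ℤ[T;T⁻¹]} (hp : p ∈ vZv) : p ∈ Zv := by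
  obtain ⟨q, rfl⟩ := memVZv_iff_mem_vZv.2 hp
  exact ⟨q * Polynomial.X, by simp⟩

theorem T_neg_one_mul_mem_Zv {p : ℤ[T;T⁻¹]} (hp : p ∈ vZv) : T (-1) * p ∈ Zv := by
  obtain ⟨q, rfl⟩ := memVZv_iff_mem_vZv.2 hp
  refine ⟨q, ?_⟩
  rw [mul_left_comm, ← T_add]
  simp

theorem exists_sub_C_mem_vZv {p : ℤ[T;T⁻¹]} (hp : p ∈ Zv) : ∃ m : ℤ, p - C m ∈ vZv := by
  obtain ⟨q, rfl⟩ := hp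
  refine ⟨q.coeff 0, memVZv_iff_mem_vZv.1 ⟨q.divX, ?_⟩⟩
  have hq := congrArg Polynomial.toLaurent q.X_mul_divX_add
  rw [map_add, map_mul, Polynomial.toLaurent_X, Polynomial.toLaurent_C] at hq
  rw [← hq]
  ring

theorem C_mul_mem_vZv (m : ℤ) {p : ℤ[T;T⁻¹]} (hp : p ∈ vZv) : C m * p ∈ vZv := by
  simpa [Algebra.smul_def] using vZv.smul_mem (Polynomial.C m) hp

namespace CoxeterSystem

variable {B W : Type*} [Group W] {M : CoxeterMatrix B} (cs : CoxeterSystem M W)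
variable {H : Type*} [Ring H] [Algebra ℤ[T;T⁻¹] H] (h : Module.Basis W ℤ[T;T⁻¹] H)

local prefix:100 "s" => cs.simple
local prefix:100 "ℓ" => cs.length

theorem simple_add_T_mul_basis
    (h_mul_gt : ∀ (i : B) (x : W), ℓ (s i * x) > ℓ x → h (s i) * h x = h (s i * x))
    (h_mul_lt : ∀ (i : B) (x : W), ℓ (s i * x) < ℓ x →
      h (s i) * h x = h (s i * x) + ((T (-1) - T 1 : ℤ[T;T⁻¹])) • h x)
    (i : B) (y : W) :
    (h (s i) + (T 1 : ℤ[T;T⁻¹]) • 1) * h y =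
      h (s i * y) + (if ℓ (s i * y) < ℓ y then T (-1) else T 1 : ℤ[T;T⁻¹]) • h y := by
  rw [add_mul, smul_mul_assoc, one_mul]
  split_ifs with hy
  · rw [h_mul_lt i y hy, add_assoc, ← add_smul, sub_add_cancel]
  · rw [h_mul_gt i y (by have := cs.length_simple_mul_ne y i; omega)]

theorem repr_simple_add_T_mul
    (h_mul_gt : ∀ (i : B) (x : W), ℓ (s i * x) > ℓ x → h (s i) * h x = h (s i * x))
    (h_mul_lt : ∀ (i : B) (x : W), ℓ (s i * x) < ℓ x →
      h (s i) * h x = h (s i * x) + ((T (-1) - T 1 : ℤ[T;T⁻¹])) • h x)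
    (i : B) (a : H) (z : W) :
    h.repr ((h (s i) + (T 1 : ℤ[T;T⁻¹]) • 1) * a) z =
      h.repr a (s i * z) + (if ℓ (s i * z) < ℓ z then T (-1) else T 1) * h.repr a z := by
  classical
  set e : W → ℤ[T;T⁻¹] := fun y ↦ if ℓ (s i * y) < ℓ y then T (-1) else T 1
  have key : Finsupp.lapply z ∘ₗ h.repr.toLinearMap ∘ₗ
      LinearMap.mulLeft ℤ[T;T⁻¹] (h (s i) + (T 1 : ℤ[T;T⁻¹]) • 1) =
      Finsupp.lapply (s i * z) ∘ₗ h.repr.toLinearMap +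
        e z • (Finsupp.lapply z ∘ₗ h.repr.toLinearMap) := by
    refine h.ext fun y ↦ ?_
    simp only [LinearMap.comp_apply, LinearMap.add_apply, LinearMap.smul_apply,
      LinearMap.mulLeft_apply, LinearEquiv.coe_coe, Finsupp.lapply_apply,
      cs.simple_add_T_mul_basis h h_mul_gt h_mul_lt, map_add, map_smul, h.repr_self,
      Finsupp.single_apply, smul_eq_mul]
    have hiff : s i * y = z ↔ y = s i * z := by rw [← eq_inv_mul_iff_mul_eq, inv_simple]
    by_cases hyz : y = z
    · subst hyz
      simp [e]
    · simp [hiff, hyz]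
  exact LinearMap.congr_fun key a

theorem map_simple_add_T (h_one : h 1 = 1)
    (h_mul_lt : ∀ (i : B) (x : W), ℓ (s i * x) < ℓ x →
      h (s i) * h x = h (s i * x) + ((T (-1) - T 1 : ℤ[T;T⁻¹])) • h x)
    (d : H →+* H) (hd_smul : ∀ (p : ℤ[T;T⁻¹]) (a : H), d (p • a) = (invert p) • d a)
    (hd_h : ∀ x : W, d (h x) = Ring.inverse (h (x⁻¹))) (i : B) :
    d (h (s i) + (T 1 : ℤ[T;T⁻¹]) • 1) = h (s i) + (T 1 : ℤ[T;T⁻¹]) • 1 := by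
  have hsq : h (s i) * h (s i) = 1 + (T (-1) - T 1 : ℤ[T;T⁻¹]) • h (s i) := by
    rw [h_mul_lt i (s i) (by simp), simple_mul_simple_self, h_one]
  have hinv : Ring.inverse (h (s i)) = h (s i) - (T (-1) - T 1 : ℤ[T;T⁻¹]) • 1 :=
    Ring.inverse_unit ⟨h (s i), h (s i) - (T (-1) - T 1 : ℤ[T;T⁻¹]) • 1,
      by rw [mul_sub, mul_smul_comm, mul_one, hsq, add_sub_cancel_right],
      by rw [sub_mul, smul_mul_assoc, one_mul, hsq, add_sub_cancel_right]⟩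
  rw [map_add, hd_h, inv_simple, hinv, hd_smul, map_one, invert_T, sub_smul]
  abel

structure IsSelfDualUnitriangular (d : H →+* H) (A : Set ℤ[T;T⁻¹]) (x : W) (b : H) : Prop where
  map_eq : d b = b
  repr_self : h.repr b x = 1
  repr_mem : ∀ y ≠ x, h.repr b y ∈ A
  bruhatChainLE_of_repr_ne_zero : ∀ y, h.repr b y ≠ 0 → cs.bruhatChainLE y x

theorem isSelfDualUnitriangular_one (h_one : h 1 = 1) (d : H →+* H) :
    cs.IsSelfDualUnitriangular h d vZv 1 1 := by
  classical
  refine ⟨map_one d, by simp [← h_one], fun y hy ↦ ?_, fun y hy ↦ ?_⟩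
  · simp [← h_one, Ne.symm hy]
  · rw [← h_one, h.repr_self, Finsupp.single_apply, ite_ne_right_iff] at hy
    rw [← hy.1]
    exact cs.bruhatChainLE_refl 1

variable {cs h}

theorem IsSelfDualUnitriangular.simple_add_T_mul (h_one : h 1 = 1)
    (h_mul_gt : ∀ (i : B) (x : W), ℓ (s i * x) > ℓ x → h (s i) * h x = h (s i * x))
    (h_mul_lt : ∀ (i : B) (x : W), ℓ (s i * x) < ℓ x →
      h (s i) * h x = h (s i * x) + ((T (-1) - T 1 : ℤ[T;T⁻¹])) • h x)
    {d : H →+* H} (hd_smul : ∀ (p : ℤ[T;T⁻¹]) (a : H), d (p • a) = (invert p) • d a)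
    (hd_h : ∀ x : W, d (h x) = Ring.inverse (h (x⁻¹))) {u : W} {b : H}
    (hb : cs.IsSelfDualUnitriangular h d vZv u b) {i : B} (hu : ℓ u < ℓ (s i * u)) :
    cs.IsSelfDualUnitriangular h d Zv (s i * u)
      ((h (s i) + (T 1 : ℤ[T;T⁻¹]) • 1) * b) := by
  have hrange : ∀ y, h.repr b y ∈ Zv := by
    intro y
    by_cases hyu : y = u
    · rw [hyu, hb.repr_self]
      exact one_mem _
    · exact mem_Zv_of_mem_vZv (hb.repr_mem y hyu)
  have hx : h.repr b (s i * u) = 0 := by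
    by_contra hne
    have := (hb.bruhatChainLE_of_repr_ne_zero _ hne).length_le
    omega
  refine ⟨?_, ?_, fun y hy ↦ ?_, fun y hy ↦ ?_⟩
  · rw [map_mul, cs.map_simple_add_T h h_one h_mul_lt d hd_smul hd_h, hb.map_eq]
  · rw [cs.repr_simple_add_T_mul h h_mul_gt h_mul_lt, simple_mul_simple_cancel_left,
      hb.repr_self, hx, mul_zero, add_zero]
  · rw [cs.repr_simple_add_T_mul h h_mul_gt h_mul_lt]
    have hsy : s i * y ≠ u := fun h' ↦ hy (by rw [← h', simple_mul_simple_cancel_left])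
    refine add_mem (mem_Zv_of_mem_vZv (hb.repr_mem _ hsy)) ?_
    split_ifs with hdesc
    · have hyu : y ≠ u := by rintro rfl; omega
      exact T_neg_one_mul_mem_Zv (hb.repr_mem y hyu)
    · exact mul_mem ⟨Polynomial.X, Polynomial.toLaurent_X⟩ (hrange y)
  · rw [cs.repr_simple_add_T_mul h h_mul_gt h_mul_lt] at hy
    by_cases hsy : h.repr b (s i * y) = 0
    · rw [hsy, zero_add] at hy
      exact (hb.bruhatChainLE_of_repr_ne_zero y (right_ne_zero_of_mul hy)).trans
        (cs.bruhatChainLE_self_simple_mul hu)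
    · simpa using (hb.bruhatChainLE_of_repr_ne_zero _ hsy).simple_mul_simple_mul (i := i) hu

theorem IsSelfDualUnitriangular.exists_of_range {d : H →+* H}
    (hd_smul : ∀ (p : ℤ[T;T⁻¹]) (a : H), d (p • a) = (invert p) • d a) {x : W} {c : H}
    (hc : cs.IsSelfDualUnitriangular h d Zv x c)
    (hlower : ∀ z, cs.bruhatChainLE z x → z ≠ x →
      ∃ b, cs.IsSelfDualUnitriangular h d vZv z b) :
    ∃ b, cs.IsSelfDualUnitriangular h d vZv x b := by
  classical
  choose! μ hμ using fun y (hy : y ≠ x) ↦ exists_sub_C_mem_vZv (hc.repr_mem y hy)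
  choose! bz hbz using hlower
  set S := (h.repr c).support.erase x
  have hS : ∀ z ∈ S, cs.bruhatChainLE z x ∧ z ≠ x := fun z hz ↦
    ⟨hc.bruhatChainLE_of_repr_ne_zero z (Finsupp.mem_support_iff.1 (Finset.mem_of_mem_erase hz)),
      Finset.ne_of_mem_erase hz⟩
  have hbS : ∀ z ∈ S, cs.IsSelfDualUnitriangular h d vZv z (bz z) := fun z hz ↦
    hbz z (hS z hz).1 (hS z hz).2
  have hrepr : ∀ y, h.repr (c - ∑ z ∈ S, C (μ z) • bz z) y =
      h.repr c y - ∑ z ∈ S, C (μ z) * h.repr (bz z) y := by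
    intro y
    simp
  have hterm : ∀ y, ∀ z ∈ S, z ≠ y → C (μ z) * h.repr (bz z) y ∈ vZv := fun y z hz hzy ↦
    C_mul_mem_vZv _ ((hbS z hz).repr_mem y (Ne.symm hzy))
  refine ⟨c - ∑ z ∈ S, C (μ z) • bz z, ?_, ?_, fun y hy ↦ ?_, fun y hy ↦ ?_⟩
  · rw [map_sub, map_sum, hc.map_eq]
    congr 1
    refine Finset.sum_congr rfl fun z hz ↦ ?_
    rw [hd_smul, invert_C, (hbS z hz).map_eq]
  · rw [hrepr, hc.repr_self, Finset.sum_eq_zero, sub_zero]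
    intro z hz
    have hxz : h.repr (bz z) x = 0 := by
      by_contra hne
      have := ((hbS z hz).bruhatChainLE_of_repr_ne_zero x hne).length_le
      have := (hS z hz).1.length_lt (hS z hz).2
      omega
    rw [hxz, mul_zero]
  · rw [hrepr]
    by_cases hyS : y ∈ S
    · rw [← Finset.add_sum_erase S _ hyS, (hbS y hyS).repr_self, mul_one, ← sub_sub]
      exact sub_mem (hμ y hy) (sum_mem fun z hz ↦
        hterm y z (Finset.mem_of_mem_erase hz) (Finset.ne_of_mem_erase hz))
    · have hcy : h.repr c y = 0 := by
        simpa [S, hy] using hyS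
      rw [hcy, zero_sub]
      exact neg_mem (sum_mem fun z hz ↦ hterm y z hz (by rintro rfl; exact hyS hz))
  · rw [hrepr] at hy
    by_cases hcy : h.repr c y = 0
    · rw [hcy, zero_sub, neg_ne_zero] at hy
      obtain ⟨z, hz, hne⟩ := Finset.exists_ne_zero_of_sum_ne_zero hy
      exact ((hbS z hz).bruhatChainLE_of_repr_ne_zero y
        (right_ne_zero_of_mul hne)).trans (hS z hz).1
    · exact hc.bruhatChainLE_of_repr_ne_zero y hcy

variable (cs h)

theorem exists_isSelfDualUnitriangular (h_one : h 1 = 1)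
    (h_mul_gt : ∀ (i : B) (x : W), ℓ (s i * x) > ℓ x → h (s i) * h x = h (s i * x))
    (h_mul_lt : ∀ (i : B) (x : W), ℓ (s i * x) < ℓ x →
      h (s i) * h x = h (s i * x) + ((T (-1) - T 1 : ℤ[T;T⁻¹])) • h x)
    (d : H →+* H) (hd_smul : ∀ (p : ℤ[T;T⁻¹]) (a : H), d (p • a) = (invert p) • d a)
    (hd_h : ∀ x : W, d (h x) = Ring.inverse (h (x⁻¹))) (x : W) :
    ∃ b, cs.IsSelfDualUnitriangular h d vZv x b := by
  induction x using (measure cs.length).wf.induction with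
  | h x ih =>
    by_cases hx : x = 1
    · exact hx ▸ ⟨1, cs.isSelfDualUnitriangular_one h h_one d⟩
    obtain ⟨i, hi⟩ := cs.exists_leftDescent_of_ne_one hx
    obtain ⟨b, hb⟩ := ih (s i * x) hi
    have hc := hb.simple_add_T_mul h_one h_mul_gt h_mul_lt hd_smul hd_h
      (by rwa [simple_mul_simple_cancel_left])
    rw [simple_mul_simple_cancel_left] at hc
    exact hc.exists_of_range hd_smul fun z hz hne ↦ ih z (hz.length_lt hne)

end CoxeterSystem

/-- For every `x ∈ W` there exists a self-dual element `bₓ ∈ H` with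
`bₓ ∈ hₓ + ∑_{y<x} v ℤ[v] h_y`, where `<` is the Bruhat order. -/
theorem hecke_KL_basis_exists {B W : Type*} [Group W] {M : CoxeterMatrix B} (cs : CoxeterSystem M W)
    {H : Type*} [Ring H] [Algebra (LaurentPolynomial ℤ) H]
    -- `h` is the standard basis of the Hecke algebra `H` of `(W, S)` over `ℤ[v, v⁻¹]`,
    -- where `v` is the Laurent variable `T 1`
    (h : Module.Basis W (LaurentPolynomial ℤ) H) (h_one : h 1 = 1)
    -- the multiplication rules characterizing the Hecke algebra:
    -- `hₛ hₓ = h_{sx}` if `sx > x`, and `hₛ hₓ = h_{sx} + (v⁻¹ - v) hₓ` if `sx < x`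
    (h_mul_gt : ∀ (i : B) (x : W), cs.length (cs.simple i * x) > cs.length x →
      h (cs.simple i) * h x = h (cs.simple i * x))
    (h_mul_lt : ∀ (i : B) (x : W), cs.length (cs.simple i * x) < cs.length x →
      h (cs.simple i) * h x = h (cs.simple i * x) + ((T (-1) - T 1 : LaurentPolynomial ℤ)) • h x)
    -- `d` is the Kazhdan–Lusztig duality: the ring endomorphism of `H` with
    -- `d(v·a) = v⁻¹·d(a)` and `d(hₓ) = (h_{x⁻¹})⁻¹`
    (d : H →+* H)
    (hd_smul : ∀ (p : LaurentPolynomial ℤ) (a : H), d (p • a) = (invert p) • d a)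
    (hd_h : ∀ x : W, d (h x) = Ring.inverse (h (x⁻¹))) :
    ∀ x : W, ∃ b : H, d b = b ∧ h.repr b x = 1 ∧
      ∀ y : W, y ≠ x →
        MemVZv (h.repr b y) ∧ ((h.repr b) y ≠ 0 → cs.bruhatLT y x) := by
  intro x
  obtain ⟨b, hb⟩ := cs.exists_isSelfDualUnitriangular h h_one h_mul_gt h_mul_lt d hd_smul hd_h x
  exact ⟨b, hb.map_eq, hb.repr_self, fun y hy ↦ ⟨memVZv_iff_mem_vZv.2 (hb.repr_mem y hy),
    fun hne ↦ ⟨cs.bruhatLE_of_bruhatChainLE (hb.bruhatChainLE_of_repr_ne_zero y hne), hy⟩⟩⟩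
end

section
/- If h ∈ H satisfies h ∈ Σ_{y∈W} vℤ[v]·h_y and d(h) = h, then h = 0. Consequently, the element b_x with b_x ∈ h_x + Σ_y vℤ[v]h_y and d(b_x) = b_x is unique for each x ∈ W. -/
/-!
The duality `d` is unitriangular with respect to the length filtration of the standard
basis: `d(hₓ) - hₓ` lies in the span of the `h_z` with `ℓ(z) < ℓ(x)`, by induction on `ℓ(x)`
starting from `d(hₛ) = hₛ⁻¹ = hₛ - (v⁻¹ - v)`. So if `a ≠ 0` is self-dual and `y` has maximal
length in the support of `a`, the coefficient `p` of `h_y` in `a` satisfies `p(v⁻¹) = p(v)`,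
which is impossible for a nonzero `p ∈ vℤ[v]`. Uniqueness of `bₓ` follows by applying this
to `b - b'`.
-/

open LaurentPolynomial

lemma MemVZv.coeff_eq_zero {p : ℤ[T;T⁻¹]} (hp : MemVZv p) {n : ℤ} (hn : n ≤ 0) :
    p.coeff n = 0 := by
  obtain ⟨q, rfl⟩ := hp
  rw [T, AddMonoidAlgebra.coeff_mul_single_apply, coeff_toLaurent, mul_one]
  refine Finsupp.mapDomain_of_notMem_range _ _ ?_
  rintro ⟨k, hk⟩
  simp only [Nat.castEmbedding_apply] at hk
  omega

lemma MemVZv.eq_zero_of_invert_eq {p : ℤ[T;T⁻¹]} (hp : MemVZv p)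
    (h : invert p = p) : p = 0 := by
  ext n
  rcases le_or_gt n 0 with hn | hn
  · simpa using hp.coeff_eq_zero hn
  · rw [← h, invert_apply]
    simpa using hp.coeff_eq_zero (by omega : -n ≤ 0)

lemma memVZv_zero : MemVZv 0 := ⟨0, by simp⟩

lemma MemVZv.sub {p q : ℤ[T;T⁻¹]} (hp : MemVZv p) (hq : MemVZv q) :
    MemVZv (p - q) := by
  obtain ⟨p', rfl⟩ := hp
  obtain ⟨q', rfl⟩ := hq
  exact ⟨p' - q', by rw [map_sub, sub_mul]⟩

namespace Module.Basis

variable {ι R M : Type*} [CommRing R] [AddCommGroup M] [Module R M] {σ : R →+* R}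
  (b : Basis ι R M) (ℓ : ι → ℕ)

lemma repr_map_basis_apply_of_triangular {f : M →ₛₗ[σ] M}
    (hf : ∀ i, f (b i) - b i ∈ Submodule.span R (b '' {j | ℓ j < ℓ i}))
    {i y : ι} (hiy : ℓ i ≤ ℓ y) : b.repr (f (b i)) y = b.repr (b i) y := by
  have hy : y ∉ ((b.repr (f (b i) - b i)).support : Set ι) := fun hy ↦
    (b.repr_support_subset_of_mem_span _ (hf i) hy).not_ge hiy
  simpa [sub_eq_zero] using hy

lemma repr_map_apply_of_triangular {f : M →ₛₗ[σ] M}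
    (hf : ∀ i, f (b i) - b i ∈ Submodule.span R (b '' {j | ℓ j < ℓ i}))
    {a : M} {y : ι} (hy : ∀ z ∈ (b.repr a).support, ℓ z ≤ ℓ y) :
    b.repr (f a) y = σ (b.repr a y) := by
  classical
  conv_lhs => rw [← b.linearCombination_repr a, Finsupp.linearCombination_apply, Finsupp.sum]
  rw [map_sum, map_sum, Finsupp.finsetSum_apply]
  calc ∑ z ∈ (b.repr a).support, b.repr (f (b.repr a z • b z)) y
      = ∑ z ∈ (b.repr a).support, σ (b.repr a z) * Finsupp.single z 1 y := by
        refine Finset.sum_congr rfl fun z hz ↦ ?_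
        rw [f.map_smulₛₗ, map_smul, Finsupp.smul_apply,
          b.repr_map_basis_apply_of_triangular ℓ hf (hy z hz), b.repr_self, smul_eq_mul]
    _ = σ (b.repr a y) := by
        simp only [Finsupp.single_apply, mul_ite, mul_one, mul_zero, Finset.sum_ite_eq',
          Finsupp.mem_support_iff]
        split_ifs with hy0 <;> simp_all

lemma eq_zero_of_triangular_of_map_eq_self {f : M →ₛₗ[σ] M}
    (hf : ∀ i, f (b i) - b i ∈ Submodule.span R (b '' {j | ℓ j < ℓ i}))
    {a : M} (hσ : ∀ i, σ (b.repr a i) = b.repr a i → b.repr a i = 0) (ha : f a = a) :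
    a = 0 := by
  by_contra hne
  obtain ⟨y, hy, hmax⟩ := (b.repr a).support.exists_max_image ℓ (by simpa using hne)
  have hfy := b.repr_map_apply_of_triangular ℓ hf hmax
  rw [ha] at hfy
  exact Finsupp.mem_support_iff.mp hy (hσ y hfy.symm)

end Module.Basis

lemma Ring.inverse_eq_sub_smul_one_of_mul_self_eq {R A : Type*} [CommSemiring R] [Ring A]
    [Algebra R A] {s : A} {c : R} (hs : s * s = 1 + c • s) : Ring.inverse s = s - c • 1 := by
  refine Ring.inverse_unit ⟨s, s - c • 1, ?_, ?_⟩
  · rw [mul_sub, hs, mul_smul_comm, mul_one, add_sub_cancel_right]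
  · rw [sub_mul, hs, smul_mul_assoc, one_mul, add_sub_cancel_right]

namespace CoxeterSystem

variable {B W : Type*} [Group W] {M : CoxeterMatrix B} (cs : CoxeterSystem M W)
  {H : Type*} [Ring H] [Algebra ℤ[T;T⁻¹] H] (h : Module.Basis W ℤ[T;T⁻¹] H)

lemma hecke_simple_mul_mem_span
    (h_mul_gt : ∀ (i : B) (x : W), cs.length (cs.simple i * x) > cs.length x →
      h (cs.simple i) * h x = h (cs.simple i * x))
    (h_mul_lt : ∀ (i : B) (x : W), cs.length (cs.simple i * x) < cs.length x →
      h (cs.simple i) * h x = h (cs.simple i * x) + (T (-1) - T 1 : ℤ[T;T⁻¹]) • h x)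
    (i : B) {n : ℕ} {r : H}
    (hr : r ∈ Submodule.span ℤ[T;T⁻¹] (h '' {z | cs.length z < n})) :
    h (cs.simple i) * r ∈ Submodule.span ℤ[T;T⁻¹] (h '' {z | cs.length z < n + 1}) := by
  suffices Submodule.span ℤ[T;T⁻¹] (h '' {z | cs.length z < n}) ≤
      (Submodule.span ℤ[T;T⁻¹] (h '' {z | cs.length z < n + 1})).comap
        (LinearMap.mulLeft ℤ[T;T⁻¹] (h (cs.simple i))) from this hr
  rw [Submodule.span_le]
  rintro _ ⟨z, hz, rfl⟩
  have mem (w : W) (hw : cs.length w < n + 1) :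
      h w ∈ Submodule.span ℤ[T;T⁻¹] (h '' {z | cs.length z < n + 1}) :=
    Submodule.subset_span ⟨w, hw, rfl⟩
  simp only [Set.mem_ofPred_eq] at hz
  simp only [SetLike.mem_coe, Submodule.mem_comap, LinearMap.mulLeft_apply]
  rcases cs.length_simple_mul z i with hgt | hlt
  · rw [h_mul_gt i z (by omega)]
    exact mem _ (by omega)
  · rw [h_mul_lt i z (by omega)]
    exact Submodule.add_mem _ (mem _ (by omega)) (Submodule.smul_mem _ _ (mem _ (by omega)))

lemma hecke_dual_simple (h_one : h 1 = 1)
    (h_mul_lt : ∀ (i : B) (x : W), cs.length (cs.simple i * x) < cs.length x →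
      h (cs.simple i) * h x = h (cs.simple i * x) + (T (-1) - T 1 : ℤ[T;T⁻¹]) • h x)
    (d : H →+* H) (hd_h : ∀ x : W, d (h x) = Ring.inverse (h (x⁻¹))) (i : B) :
    d (h (cs.simple i)) = h (cs.simple i) - (T (-1) - T 1 : ℤ[T;T⁻¹]) • 1 := by
  rw [hd_h, inv_simple]
  refine Ring.inverse_eq_sub_smul_one_of_mul_self_eq ?_
  rw [h_mul_lt i _ (by simp), simple_mul_simple_self, h_one]

lemma hecke_dual_sub_mem_span (h_one : h 1 = 1)
    (h_mul_gt : ∀ (i : B) (x : W), cs.length (cs.simple i * x) > cs.length x →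
      h (cs.simple i) * h x = h (cs.simple i * x))
    (h_mul_lt : ∀ (i : B) (x : W), cs.length (cs.simple i * x) < cs.length x →
      h (cs.simple i) * h x = h (cs.simple i * x) + (T (-1) - T 1 : ℤ[T;T⁻¹]) • h x)
    (d : H →+* H) (hd_h : ∀ x : W, d (h x) = Ring.inverse (h (x⁻¹))) (x : W) :
    d (h x) - h x ∈ Submodule.span ℤ[T;T⁻¹] (h '' {z | cs.length z < cs.length x}) := by
  induction hn : cs.length x generalizing x with
  | zero =>
    rw [cs.length_eq_zero_iff.mp hn, h_one, map_one, sub_self]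
    exact Submodule.zero_mem _
  | succ n ih =>
    obtain ⟨i, hi⟩ := cs.exists_leftDescent_of_ne_one (w := x) (by rintro rfl; simp at hn)
    rw [isLeftDescent_iff, hn, Nat.add_right_cancel_iff] at hi
    have hx : h (cs.simple i) * h (cs.simple i * x) = h x := by
      rw [h_mul_gt i _ (by rw [simple_mul_simple_cancel_left, hi, hn]; omega),
        simple_mul_simple_cancel_left]
    have hx' := ih _ hi
    have hdx : d (h x) - h x = h (cs.simple i) * (d (h (cs.simple i * x)) - h (cs.simple i * x))
        - (T (-1) - T 1 : ℤ[T;T⁻¹]) • d (h (cs.simple i * x)) := by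
      rw [← hx, map_mul, hecke_dual_simple cs h h_one h_mul_lt d hd_h, sub_mul, smul_mul_assoc,
        one_mul, mul_sub]
      abel
    rw [hdx]
    refine Submodule.sub_mem _ (hecke_simple_mul_mem_span cs h h_mul_gt h_mul_lt i hx') ?_
    refine Submodule.smul_mem _ _ ?_
    rw [← sub_add_cancel (d _) (h _)]
    refine Submodule.add_mem _ (Submodule.span_mono (Set.image_mono fun z hz ↦ ?_) hx')
      (Submodule.subset_span ⟨_, by simp [hi], rfl⟩)
    simp only [Set.mem_ofPred_eq] at hz ⊢
    omega

end CoxeterSystem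

theorem hecke_KL_selfdual_unique_general {B W : Type*} [Group W] {M : CoxeterMatrix B} (cs : CoxeterSystem M W)
    {H : Type*} [Ring H] [Algebra (LaurentPolynomial ℤ) H]
    -- `h` is the standard basis of the Hecke algebra `H` of `(W, S)` over `ℤ[v, v⁻¹]`,
    -- where `v` is the Laurent variable `T 1`
    (h : Module.Basis W (LaurentPolynomial ℤ) H) (h_one : h 1 = 1)
    -- the multiplication rules characterizing the Hecke algebra:
    -- `hₛ hₓ = h_{sx}` if `sx > x`, and `hₛ hₓ = h_{sx} + (v⁻¹ - v) hₓ` if `sx < x`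
    (h_mul_gt : ∀ (i : B) (x : W), cs.length (cs.simple i * x) > cs.length x →
      h (cs.simple i) * h x = h (cs.simple i * x))
    (h_mul_lt : ∀ (i : B) (x : W), cs.length (cs.simple i * x) < cs.length x →
      h (cs.simple i) * h x = h (cs.simple i * x) + ((T (-1) - T 1 : LaurentPolynomial ℤ)) • h x)
    -- `d` is the Kazhdan–Lusztig duality: the ring endomorphism of `H` with
    -- `d(v·a) = v⁻¹·d(a)` and `d(hₓ) = (h_{x⁻¹})⁻¹`
    (d : H →+* H)
    (hd_smul : ∀ (p : LaurentPolynomial ℤ) (a : H), d (p • a) = (invert p) • d a)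
    (hd_h : ∀ x : W, d (h x) = Ring.inverse (h (x⁻¹))) :
    (∀ a : H, (∀ y : W, MemVZv (h.repr a y)) → d a = a → a = 0) ∧
    (∀ (x : W) (b b' : H),
      (d b = b ∧ h.repr b x = 1 ∧ ∀ y : W, y ≠ x → MemVZv (h.repr b y)) →
      (d b' = b' ∧ h.repr b' x = 1 ∧ ∀ y : W, y ≠ x → MemVZv (h.repr b' y)) →
      b = b') := by
  have eq_zero (a : H) (ha : ∀ y : W, MemVZv (h.repr a y)) (hda : d a = a) : a = 0 :=
    h.eq_zero_of_triangular_of_map_eq_self cs.length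
      (f := ({ d.toAddMonoidHom with map_smul' := hd_smul } :
        H →ₛₗ[(invert : ℤ[T;T⁻¹] ≃ₐ[ℤ] ℤ[T;T⁻¹])] H))
      (cs.hecke_dual_sub_mem_span h h_one h_mul_gt h_mul_lt d hd_h)
      (fun y ↦ (ha y).eq_zero_of_invert_eq) hda
  refine ⟨eq_zero, ?_⟩
  rintro x b b' ⟨hdb, hbx, hb⟩ ⟨hdb', hbx', hb'⟩
  refine sub_eq_zero.mp (eq_zero (b - b') (fun y ↦ ?_) (by rw [map_sub, hdb, hdb']))
  rw [map_sub, Finsupp.sub_apply]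
  obtain rfl | hyx := eq_or_ne y x
  · rw [hbx, hbx', sub_self]
    exact memVZv_zero
  · exact (hb y hyx).sub (hb' y hyx)

/-- If `a ∈ H` satisfies `a ∈ ∑_y v ℤ[v] h_y` and `d(a) = a`, then
`a = 0`. Consequently, the element `bₓ` with `bₓ ∈ hₓ + ∑_y v ℤ[v] h_y` and `d(bₓ) = bₓ`
is unique for each `x ∈ W`. (Following the context, we assume the existence of self-dual
elements `b_y ∈ h_y + ∑_{z<y} v ℤ[v] h_z` for all `y`.) -/
theorem hecke_KL_selfdual_unique {B W : Type*} [Group W] {M : CoxeterMatrix B} (cs : CoxeterSystem M W)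
    {H : Type*} [Ring H] [Algebra (LaurentPolynomial ℤ) H]
    -- `h` is the standard basis of the Hecke algebra `H` of `(W, S)` over `ℤ[v, v⁻¹]`,
    -- where `v` is the Laurent variable `T 1`
    (h : Module.Basis W (LaurentPolynomial ℤ) H) (h_one : h 1 = 1)
    -- the multiplication rules characterizing the Hecke algebra:
    -- `hₛ hₓ = h_{sx}` if `sx > x`, and `hₛ hₓ = h_{sx} + (v⁻¹ - v) hₓ` if `sx < x`
    (h_mul_gt : ∀ (i : B) (x : W), cs.length (cs.simple i * x) > cs.length x →
      h (cs.simple i) * h x = h (cs.simple i * x))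
    (h_mul_lt : ∀ (i : B) (x : W), cs.length (cs.simple i * x) < cs.length x →
      h (cs.simple i) * h x = h (cs.simple i * x) + ((T (-1) - T 1 : LaurentPolynomial ℤ)) • h x)
    -- `d` is the Kazhdan–Lusztig duality: the ring endomorphism of `H` with
    -- `d(v·a) = v⁻¹·d(a)` and `d(hₓ) = (h_{x⁻¹})⁻¹`
    (d : H →+* H)
    (hd_smul : ∀ (p : LaurentPolynomial ℤ) (a : H), d (p • a) = (invert p) • d a)
    (hd_h : ∀ x : W, d (h x) = Ring.inverse (h (x⁻¹)))
    (hb_ex : ∀ x : W, ∃ b : H, d b = b ∧ h.repr b x = 1 ∧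
      ∀ y : W, y ≠ x →
        MemVZv (h.repr b y) ∧ ((h.repr b) y ≠ 0 → cs.bruhatLT y x)) :
    (∀ a : H, (∀ y : W, MemVZv (h.repr a y)) → d a = a → a = 0) ∧
    (∀ (x : W) (b b' : H),
      (d b = b ∧ h.repr b x = 1 ∧ ∀ y : W, y ≠ x → MemVZv (h.repr b y)) →
      (d b' = b' ∧ h.repr b' x = 1 ∧ ∀ y : W, y ≠ x → MemVZv (h.repr b' y)) →
      b = b') :=
  hecke_KL_selfdual_unique_general cs h h_one h_mul_gt h_mul_lt d hd_smul hd_h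
end

section
/- With R = ℝ[x,y,z], s swapping x,y, and B_s = R ⊗_{R^s} R(1), there is an isomorphism of graded R-bimodules B_s ⊗_R B_s ≅ B_s(1) ⊕ B_s(-1). -/
open MvPolynomial TensorProduct

set_option synthInstance.maxHeartbeats 1000000
set_option maxHeartbeats 2000000

/-- `R = ℝ[x,y,z]` (`x = X 0`, `y = X 1`, `z = X 2`), with the paper's grading: the usual
grading multiplied by two, so a polynomial homogeneous of standard degree `a` has paper
degree `2a`. -/
noncomputable abbrev RR3 : Type := MvPolynomial (Fin 3) ℝ

/-- The action of the simple reflection `s`, exchanging `x` and `y`. -/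
noncomputable def sAct : RR3 ≃ₐ[ℝ] RR3 :=
  MvPolynomial.renameEquiv ℝ (Equiv.swap (0 : Fin 3) 1)

/-- The invariant subring `Rˢ`. -/
noncomputable def Rs : Subalgebra ℝ RR3 :=
  AlgHom.equalizer (sAct : RR3 →ₐ[ℝ] RR3) (AlgHom.id ℝ RR3)

/-- The Soergel bimodule `Bₛ = R ⊗_{Rˢ} R (1)` (as an `R`-bimodule; the grading shift is
accounted for in the grading predicates below). -/
noncomputable abbrev Bs : Type := RR3 ⊗[Rs] RR3

noncomputable instance iABs : Algebra Rs Bs := Algebra.TensorProduct.leftAlgebra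

/-- The product `Bₛ Bₛ = Bₛ ⊗_R Bₛ ≅ R ⊗_{Rˢ} R ⊗_{Rˢ} R (2)`. -/
noncomputable abbrev BsBs : Type := @TensorProduct Rs _ RR3 Bs _ _ _ iABs.toModule

noncomputable instance : CommRing BsBs :=
  Algebra.TensorProduct.instCommRing (R := Rs) (A := RR3) (B := Bs)

noncomputable instance iRBs : Algebra ℝ Bs := Algebra.TensorProduct.leftAlgebra

noncomputable instance iRBsBs : Algebra ℝ BsBs :=
  Algebra.TensorProduct.leftAlgebra (R := Rs) (A := RR3) (B := Bs) (S := ℝ)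

/-- The degree-`n` component of `Bₛ = R ⊗_{Rˢ} R (1)`: spanned by the pure tensors
`p ⊗ₜ q` with `p, q` homogeneous of standard degrees `a, b` and `2a + 2b - 1 = n`
(variables sit in degree `2` and `(1)` shifts degrees down by one). -/
noncomputable def BsDeg (n : ℤ) : Submodule ℝ Bs :=
  Submodule.span ℝ {u : Bs | ∃ (p q : RR3) (a b : ℕ),
    p.IsHomogeneous a ∧ q.IsHomogeneous b ∧ u = p ⊗ₜ q ∧ 2 * (a : ℤ) + 2 * b - 1 = n}

/-- The degree-`n` component of `Bₛ Bₛ ≅ R ⊗_{Rˢ} R ⊗_{Rˢ} R (2)`. -/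
noncomputable def BsBsDeg (n : ℤ) : Submodule ℝ BsBs :=
  Submodule.span ℝ {u : BsBs | ∃ (p q r : RR3) (a b c : ℕ),
    p.IsHomogeneous a ∧ q.IsHomogeneous b ∧ r.IsHomogeneous c ∧
    u = p ⊗ₜ (q ⊗ₜ r) ∧ 2 * (a : ℤ) + 2 * b + 2 * c - 2 = n}

/-!
Write `x, y` for `X 0, X 1` and `∂ p = (p - s p) / (x - y)` for the divided difference. Both
`∂ p` and `p - x ∂ p` are `s`-invariant, and `p = (p - x ∂ p) + x ∂ p` writes `R` as a free
`Rˢ`-module with basis `1, x`. Splitting the middle factor of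
`Bₛ Bₛ ≅ R ⊗_{Rˢ} R ⊗_{Rˢ} R` accordingly gives `Bₛ ⊕ Bₛ`, compatibly with the outer
`R`-actions; since `∂` lowers the paper's degree by `2`, the two summands sit in degrees
shifted by `+1` and `-1`.
-/

namespace MvPolynomial

variable {σ R : Type*}

theorem homogeneousComponent_mul_of_isHomogeneous_left [CommSemiring R]
    {φ : MvPolynomial σ R} {m : ℕ} (hφ : φ.IsHomogeneous m) (n : ℕ) (ψ : MvPolynomial σ R) :
    homogeneousComponent (m + n) (φ * ψ) = φ * homogeneousComponent n ψ := by
  let _ := gradedAlgebra (σ := σ) (R := R)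
  have h (k : ℕ) (χ : MvPolynomial σ R) :
      (DirectSum.decompose (homogeneousSubmodule σ R) χ k : MvPolynomial σ R) =
        homogeneousComponent k χ :=
    decomposition.decompose'_apply χ k
  have := DirectSum.coe_decompose_mul_of_left_mem_of_le (homogeneousSubmodule σ R) (b := ψ)
    ((mem_homogeneousSubmodule m φ).mpr hφ) (Nat.le_add_right m n)
  rwa [Nat.add_sub_cancel_left, h, h] at this

variable [CommRing R]

theorem X_sub_X_ne_zero [Nontrivial R] {i j : σ} (hij : i ≠ j) :
    (X i - X j : MvPolynomial σ R) ≠ 0 :=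
  sub_ne_zero.mpr fun h => hij (X_injective h)

variable [DecidableEq σ] (i j : σ)

theorem X_sub_X_dvd_sub_rename_swap (p : MvPolynomial σ R) :
    X i - X j ∣ p - rename (Equiv.swap i j) p := by
  set I := Ideal.span {(X i - X j : MvPolynomial σ R)}
  have hI : X i - X j ∈ I := Ideal.mem_span_singleton_self _
  have hX : (Ideal.Quotient.mkₐ R I).comp (rename (Equiv.swap i j)) =
      Ideal.Quotient.mkₐ R I := by
    refine algHom_ext fun k => ?_
    simp only [AlgHom.comp_apply, rename_X, Ideal.Quotient.mkₐ_eq_mk, Ideal.Quotient.eq]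
    by_cases hki : k = i
    · subst hki
      simpa using I.neg_mem hI
    by_cases hkj : k = j
    · subst hkj
      simpa using hI
    · simp [Equiv.swap_apply_of_ne_of_ne hki hkj]
  rw [← Ideal.mem_span_singleton, ← Ideal.Quotient.eq]
  exact (congrArg (· p) hX).symm

/-- The divided difference `(p - s p) / (X i - X j)`, where `s` swaps `X i` and `X j`. -/
noncomputable def divDiff (p : MvPolynomial σ R) : MvPolynomial σ R :=
  (X_sub_X_dvd_sub_rename_swap i j p).choose

theorem sub_rename_swap_eq_mul_divDiff (p : MvPolynomial σ R) :
    p - rename (Equiv.swap i j) p = (X i - X j) * divDiff i j p :=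
  (X_sub_X_dvd_sub_rename_swap i j p).choose_spec

theorem rename_swap_rename_swap (p : MvPolynomial σ R) :
    rename (Equiv.swap i j) (rename (Equiv.swap i j) p) = p := by
  rw [rename_rename, ← Equiv.coe_trans, Equiv.swap_swap, Equiv.coe_refl, rename_id_apply]

variable {i j} [IsDomain R] (hij : i ≠ j)
include hij

theorem divDiff_eq_of_sub_rename_swap {p q : MvPolynomial σ R}
    (h : p - rename (Equiv.swap i j) p = (X i - X j) * q) : divDiff i j p = q :=
  mul_left_cancel₀ (X_sub_X_ne_zero hij) ((sub_rename_swap_eq_mul_divDiff i j p).symm.trans h)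

theorem divDiff_add (p q : MvPolynomial σ R) :
    divDiff i j (p + q) = divDiff i j p + divDiff i j q :=
  divDiff_eq_of_sub_rename_swap hij <| by
    rw [map_add, mul_add, ← sub_rename_swap_eq_mul_divDiff, ← sub_rename_swap_eq_mul_divDiff]
    ring

theorem divDiff_mul_of_rename_swap_eq {a : MvPolynomial σ R}
    (ha : rename (Equiv.swap i j) a = a) (p : MvPolynomial σ R) :
    divDiff i j (a * p) = a * divDiff i j p :=
  divDiff_eq_of_sub_rename_swap hij <| by
    rw [map_mul, ha, ← mul_sub, sub_rename_swap_eq_mul_divDiff]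
    ring

theorem divDiff_eq_zero_of_rename_swap_eq {p : MvPolynomial σ R}
    (hp : rename (Equiv.swap i j) p = p) : divDiff i j p = 0 :=
  divDiff_eq_of_sub_rename_swap hij (by rw [hp, sub_self, mul_zero])

theorem divDiff_X_left : divDiff i j (X i : MvPolynomial σ R) = 1 :=
  divDiff_eq_of_sub_rename_swap hij (by rw [rename_X, Equiv.swap_apply_left, mul_one])

theorem rename_swap_divDiff (p : MvPolynomial σ R) :
    rename (Equiv.swap i j) (divDiff i j p) = divDiff i j p := by
  refine (divDiff_eq_of_sub_rename_swap hij ?_).symm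
  have h := congrArg (rename (Equiv.swap i j)) (sub_rename_swap_eq_mul_divDiff i j p)
  rw [map_sub, map_mul, map_sub, rename_swap_rename_swap, rename_X, rename_X,
    Equiv.swap_apply_left, Equiv.swap_apply_right] at h
  linear_combination -h

theorem IsHomogeneous.divDiff {p : MvPolynomial σ R} {n : ℕ} (hp : p.IsHomogeneous (n + 1)) :
    (MvPolynomial.divDiff i j p).IsHomogeneous n := by
  have hs : (p - rename (Equiv.swap i j) p).IsHomogeneous (1 + n) :=
    (add_comm n 1) ▸ hp.sub hp.rename_isHomogeneous
  have h : p - rename (Equiv.swap i j) p =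
      (X i - X j) * homogeneousComponent n (MvPolynomial.divDiff i j p) := by
    rw [← homogeneousComponent_mul_of_isHomogeneous_left
        ((isHomogeneous_X R i).sub (isHomogeneous_X R j)),
      ← sub_rename_swap_eq_mul_divDiff, homogeneousComponent_eq_self hs]
  rw [divDiff_eq_of_sub_rename_swap hij h]
  exact homogeneousComponent_isHomogeneous n _

theorem divDiff_eq_zero_of_isHomogeneous_zero {p : MvPolynomial σ R}
    (hp : p.IsHomogeneous 0) : divDiff i j p = 0 := by
  refine divDiff_eq_zero_of_rename_swap_eq hij ?_
  rw [totalDegree_eq_zero_iff_eq_C.mp ((totalDegree_zero_iff_isHomogeneous σ).mpr hp), rename_C]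

theorem IsHomogeneous.sub_X_mul_divDiff {p : MvPolynomial σ R} {n : ℕ}
    (hp : p.IsHomogeneous n) : (p - X i * MvPolynomial.divDiff i j p).IsHomogeneous n := by
  cases n with
  | zero => rwa [divDiff_eq_zero_of_isHomogeneous_zero hij hp, mul_zero, sub_zero]
  | succ n => exact hp.sub (add_comm 1 n ▸ (isHomogeneous_X R i).mul (hp.divDiff hij))

theorem rename_swap_sub_X_mul_divDiff (p : MvPolynomial σ R) :
    rename (Equiv.swap i j) (p - X i * divDiff i j p) = p - X i * divDiff i j p := by
  have h := sub_rename_swap_eq_mul_divDiff i j p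
  rw [map_sub, map_mul, rename_X, Equiv.swap_apply_left, rename_swap_divDiff hij]
  linear_combination -h

/-- `MvPolynomial σ R` is free over the `swap i j`-invariants, with basis `1, X i`. -/
noncomputable def equivSwapInvariantsProd (S : Subalgebra R (MvPolynomial σ R))
    (hS : ∀ a, a ∈ S ↔ rename (Equiv.swap i j) a = a) : MvPolynomial σ R ≃ₗ[S] S × S where
  toFun p := (⟨p - X i * divDiff i j p, (hS _).mpr (rename_swap_sub_X_mul_divDiff hij p)⟩,
    ⟨divDiff i j p, (hS _).mpr (rename_swap_divDiff hij p)⟩)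
  invFun a := (a.1 : MvPolynomial σ R) + X i * (a.2 : MvPolynomial σ R)
  map_add' p q := by
    refine Prod.ext (Subtype.ext ?_) (Subtype.ext ?_)
    · simp only [divDiff_add hij, Prod.fst_add, Subalgebra.coe_add]
      ring
    · simp only [divDiff_add hij, Prod.snd_add, Subalgebra.coe_add]
  map_smul' a p := by
    have ha := divDiff_mul_of_rename_swap_eq hij ((hS a).mp a.2) p
    refine Prod.ext (Subtype.ext ?_) (Subtype.ext ?_)
    · simp only [Subalgebra.smul_def, smul_eq_mul, ha, RingHom.id_apply, Prod.smul_fst,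
        Subalgebra.coe_mul]
      ring
    · simp only [Subalgebra.smul_def, smul_eq_mul, ha, RingHom.id_apply, Prod.smul_snd,
        Subalgebra.coe_mul]
  left_inv p := by simp
  right_inv a := by
    have h1 := divDiff_eq_zero_of_rename_swap_eq hij ((hS _).mp a.1.2)
    have h2 := divDiff_mul_of_rename_swap_eq hij ((hS _).mp a.2.2) (X i)
    rw [divDiff_X_left hij, mul_one, mul_comm] at h2
    have h : divDiff i j ((a.1 : MvPolynomial σ R) + X i * (a.2 : MvPolynomial σ R)) = a.2 := by
      rw [divDiff_add hij, h1, h2, zero_add]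
    refine Prod.ext (Subtype.ext ?_) (Subtype.ext ?_)
    · simp only [h, add_sub_cancel_right]
    · exact h

end MvPolynomial

theorem mem_Rs_iff (a : RR3) : a ∈ Rs ↔ rename (Equiv.swap 0 1) a = a := Iff.rfl

noncomputable def equivRsProd : RR3 ≃ₗ[Rs] Rs × Rs :=
  equivSwapInvariantsProd (by decide : (0 : Fin 3) ≠ 1) Rs mem_Rs_iff

noncomputable def bsBsEquiv : BsBs ≃ₗ[Rs] Bs × Bs :=
  (TensorProduct.assoc Rs RR3 RR3 RR3).symm ≪≫ₗ
    LinearEquiv.rTensor RR3 (LinearEquiv.lTensor RR3 equivRsProd ≪≫ₗ prodRight Rs Rs RR3 Rs Rs ≪≫ₗ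
      (TensorProduct.rid Rs RR3).prodCongr (TensorProduct.rid Rs RR3)) ≪≫ₗ
    prodLeft Rs Rs RR3 RR3 RR3

theorem bsBsEquiv_tmul (p q r : RR3) :
    bsBsEquiv (p ⊗ₜ (q ⊗ₜ r)) =
      (((q - X 0 * divDiff 0 1 q) * p) ⊗ₜ r, (divDiff 0 1 q * p) ⊗ₜ r) :=
  rfl

theorem bsBsEquiv_mul_tmul_mul (p q : RR3) (u : BsBs) :
    bsBsEquiv (((p ⊗ₜ 1 : BsBs) * u) * (1 ⊗ₜ (1 ⊗ₜ q))) =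
      ((p ⊗ₜ 1 : Bs) * (bsBsEquiv u).1 * (1 ⊗ₜ q),
        (p ⊗ₜ 1 : Bs) * (bsBsEquiv u).2 * (1 ⊗ₜ q)) := by
  induction u using TensorProduct.induction_on with
  | zero =>
    simp only [mul_zero, zero_mul, map_zero, Prod.fst_zero, Prod.snd_zero, Prod.mk_zero_zero]
  | add u v hu hv =>
    simp only [mul_add, add_mul, map_add, hu, hv, Prod.fst_add, Prod.snd_add, Prod.mk_add_mk]
  | tmul a v =>
    induction v using TensorProduct.induction_on with
    | zero =>
      simp only [tmul_zero, mul_zero, zero_mul, map_zero, Prod.fst_zero, Prod.snd_zero,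
        Prod.mk_zero_zero]
    | add v w hv hw =>
      simp only [tmul_add, mul_add, add_mul, map_add, hv, hw, Prod.fst_add, Prod.snd_add,
        Prod.mk_add_mk]
    | tmul b c =>
      simp only [Algebra.TensorProduct.tmul_mul_tmul, one_mul, mul_one, bsBsEquiv_tmul,
        mul_left_comm _ p]

theorem tmul_mem_BsDeg {p r : RR3} {a c : ℕ} (hp : p.IsHomogeneous a) (hr : r.IsHomogeneous c)
    {n : ℤ} (hn : 2 * (a : ℤ) + 2 * c - 1 = n) : (p ⊗ₜ r : Bs) ∈ BsDeg n :=
  Submodule.subset_span ⟨p, r, a, c, hp, hr, rfl, hn⟩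

theorem map_BsBsDeg_le (n : ℤ) :
    (BsBsDeg n).map (bsBsEquiv.restrictScalars ℝ).toLinearMap ≤
      (BsDeg (n + 1)).prod (BsDeg (n - 1)) := by
  rw [BsBsDeg, Submodule.map_span, Submodule.span_le]
  rintro _ ⟨_, ⟨p, q, r, a, b, c, hp, hq, hr, rfl, rfl⟩, rfl⟩
  have h01 : (0 : Fin 3) ≠ 1 := by decide
  refine ⟨?_, ?_⟩
  · exact tmul_mem_BsDeg ((hq.sub_X_mul_divDiff h01).mul hp) hr (by push_cast; ring)
  · show ((divDiff 0 1 q * p) ⊗ₜ r : Bs) ∈ BsDeg _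
    cases b with
    | zero =>
      rw [divDiff_eq_zero_of_isHomogeneous_zero h01 hq, zero_mul, zero_tmul]
      exact zero_mem _
    | succ b => exact tmul_mem_BsDeg ((hq.divDiff h01).mul hp) hr (by push_cast; ring)

/-- With `R = ℝ[x,y,z]`, `s` swapping `x` and `y`, and
`Bₛ = R ⊗_{Rˢ} R (1)`, there is an isomorphism of graded `R`-bimodules
`Bₛ ⊗_R Bₛ ≅ Bₛ(1) ⊕ Bₛ(-1)`: an `ℝ`-linear equivalence commuting with the left and
right multiplications by `R` and sending the degree-`n` component of `Bₛ Bₛ` into the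
degree-`(n+1)` and degree-`(n-1)` components of `Bₛ` respectively. -/
theorem BsBs_iso_Bs_shifted :
    ∃ f : BsBs ≃ₗ[ℝ] Bs × Bs,
      (∀ (p q : RR3) (u : BsBs),
        f (((p ⊗ₜ 1 : BsBs) * u) * (1 ⊗ₜ (1 ⊗ₜ q))) =
          ((p ⊗ₜ 1 : Bs) * (f u).1 * (1 ⊗ₜ q), (p ⊗ₜ 1 : Bs) * (f u).2 * (1 ⊗ₜ q))) ∧
      (∀ (n : ℤ) (u : BsBs), u ∈ BsBsDeg n →
        (f u).1 ∈ BsDeg (n + 1) ∧ (f u).2 ∈ BsDeg (n - 1)) :=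
  ⟨bsBsEquiv.restrictScalars ℝ, bsBsEquiv_mul_tmul_mul,
    fun n u hu => map_BsBsDeg_le n ⟨u, hu, rfl⟩⟩
end

section
/- With R = ℝ[x,y,z] and W = S₃ permuting the variables, there is an isomorphism of graded R^W-modules R ≅ ⊕_{w∈S₃} R^W(-2ℓ(w)), where ℓ is the Coxeter length; explicitly R is free of rank 6 over R^W = ℝ[e₁,e₂,e₃] with graded ranks given by the Poincaré polynomial of S₃. -/
/-!
The monomials `x^a y^b` (`a ≤ 2`, `b ≤ 1`) form an `R^W`-basis of `R`.

They span: their `R^W`-span contains `1` and is stable under multiplication by `x`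
(`x³ = e₁x² - e₂x + e₃`), by `y` (`y² = (y + z)y - yz`, where `y + z = e₁ - x` and
`yz = e₂ - x(e₁ - x)`), and by `z = e₁ - x - y`.

They are independent: swapping `y` and `z` in a relation `P(x) + Q(x) y = 0`, with `P`, `Q`
quadratic over `R^W`, gives `P(x) + Q(x) z = 0`, so `P(x) = Q(x) = 0`; then `P` also vanishes
at `y` and `z`, and a quadratic with three distinct roots in a domain is zero.

`x^a y^b` has degree `a + b`, the number of inversions of the permutation with Lehmer code
`(a, b)`, and that is its Coxeter length.
-/

open MvPolynomial

/-- The action of the simple reflection `r = (23)`, exchanging `y` and `z`. -/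
noncomputable def rAct : RR3 ≃ₐ[ℝ] RR3 :=
  MvPolynomial.renameEquiv ℝ (Equiv.swap (1 : Fin 3) 2)

/-- The ring of symmetric polynomials `R^W  = ℝ[x+y+z, xy+xz+yz, xyz]`, i.e. the
polynomials invariant under both simple reflections. -/
noncomputable def RW : Subalgebra ℝ RR3 :=
  AlgHom.equalizer (sAct : RR3 →ₐ[ℝ] RR3) (AlgHom.id ℝ RR3) ⊓
    AlgHom.equalizer (rAct : RR3 →ₐ[ℝ] RR3) (AlgHom.id ℝ RR3)

/-- The Coxeter length of a permutation of `{0,1,2}` with respect to the simple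
transpositions `s = (01)` and `r = (12)`. -/
noncomputable def coxLen (w : Equiv.Perm (Fin 3)) : ℕ :=
  sInf {n | ∃ l : List (Equiv.Perm (Fin 3)), l.length = n ∧
    (∀ x ∈ l, x = Equiv.swap 0 1 ∨ x = Equiv.swap 1 2) ∧ l.prod = w}

open Equiv

section Roots

variable {A : Type*} [CommRing A] [IsDomain A]

theorem coeffs_eq_zero_of_linear_two_roots {p q a b : A} (hab : a ≠ b)
    (ha : p + q * a = 0) (hb : p + q * b = 0) : p = 0 ∧ q = 0 := by
  have hq : q = 0 := by
    have h : (a - b) * q = 0 := by linear_combination ha - hb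
    exact (mul_eq_zero.mp h).resolve_left (sub_ne_zero.mpr hab)
  exact ⟨by simpa [hq] using ha, hq⟩

theorem coeffs_eq_zero_of_quadratic_three_roots {p q r a b c : A}
    (hab : a ≠ b) (hac : a ≠ c) (hbc : b ≠ c) (ha : p + q * a + r * a ^ 2 = 0)
    (hb : p + q * b + r * b ^ 2 = 0) (hc : p + q * c + r * c ^ 2 = 0) :
    p = 0 ∧ q = 0 ∧ r = 0 := by
  have hb' : (q + r * a) + r * b = 0 := by
    have h : (b - a) * ((q + r * a) + r * b) = 0 := by linear_combination hb - ha
    exact (mul_eq_zero.mp h).resolve_left (sub_ne_zero.mpr hab.symm)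
  have hc' : (q + r * a) + r * c = 0 := by
    have h : (c - a) * ((q + r * a) + r * c) = 0 := by linear_combination hc - ha
    exact (mul_eq_zero.mp h).resolve_left (sub_ne_zero.mpr hac.symm)
  obtain ⟨hqa, hr⟩ := coeffs_eq_zero_of_linear_two_roots hbc hb' hc'
  have hq : q = 0 := by simpa [hr] using hqa
  exact ⟨by simpa [hq, hr] using ha, hq, hr⟩

end Roots

theorem Submodule.mul_mem_span_of_forall_mul_mem {R B : Type*} [CommSemiring R] [Semiring B]
    [Algebra R B] {s : Set B} {q : B} (h : ∀ g ∈ s, q * g ∈ span R s) {p : B}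
    (hp : p ∈ span R s) : q * p ∈ span R s := by
  induction hp using Submodule.span_induction with
  | mem g hg => exact h g hg
  | zero => simp
  | add u v _ _ hu hv => rw [mul_add]; exact add_mem hu hv
  | smul c u _ hu => rw [mul_smul_comm]; exact smul_mem _ c hu

theorem mem_RW_iff {p : RR3} :
    p ∈ RW ↔ rename (swap (0 : Fin 3) 1) p = p ∧ rename (swap (1 : Fin 3) 2) p = p :=
  Iff.rfl

theorem rename_eq_self_of_mem_RW {p : RR3} (hp : p ∈ RW) (σ : Perm (Fin 3)) :
    rename σ p = p := by
  have hσ : σ ∈ Submonoid.closure (Set.range fun i : Fin 2 => swap i.castSucc i.succ) := by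
    rw [Perm.mclosure_swap_castSucc_succ]; trivial
  induction hσ using Submonoid.closure_induction with
  | mem τ hτ =>
    obtain ⟨i, rfl⟩ := hτ
    fin_cases i
    exacts [hp.1, hp.2]
  | one => simp
  | mul σ τ _ _ hσ hτ => rw [Perm.coe_mul, ← rename_rename, hτ, hσ]

noncomputable def e₁ : RR3 := X 0 + X 1 + X 2
noncomputable def e₂ : RR3 := X 0 * X 1 + X 0 * X 2 + X 1 * X 2
noncomputable def e₃ : RR3 := X 0 * X 1 * X 2

theorem e₁_mem_RW : e₁ ∈ RW :=
  mem_RW_iff.mpr (by constructor <;> simp [e₁, rename_X, swap_apply_def] <;> ring)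

theorem e₂_mem_RW : e₂ ∈ RW :=
  mem_RW_iff.mpr (by constructor <;> simp [e₂, rename_X, swap_apply_def] <;> ring)

theorem e₃_mem_RW : e₃ ∈ RW :=
  mem_RW_iff.mpr (by constructor <;> simp [e₃, rename_X, swap_apply_def] <;> ring)

theorem X_zero_pow_three : (X 0 : RR3) ^ 3 = e₁ * X 0 ^ 2 - e₂ * X 0 + e₃ := by
  simp only [e₁, e₂, e₃]; ring

theorem X_one_sq :
    (X 1 : RR3) ^ 2 = e₁ * X 1 - X 0 * X 1 - e₂ + e₁ * X 0 - X 0 * X 0 := by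
  simp only [e₁, e₂]; ring

theorem X_two_eq : (X 2 : RR3) = e₁ - X 0 - X 1 := by
  simp only [e₁]; ring

noncomputable def artinMonomial (i : Fin 3 × Fin 2) : RR3 := X 0 ^ (i.1 : ℕ) * X 1 ^ (i.2 : ℕ)

local notation "𝔐" => Submodule.span RW (Set.range artinMonomial)

theorem coe_mul_mem_span {c : RR3} (hc : c ∈ RW) {p : RR3} (hp : p ∈ 𝔐) : c * p ∈ 𝔐 := by
  simpa only [Subalgebra.smul_def, smul_eq_mul] using Submodule.smul_mem 𝔐 (⟨c, hc⟩ : RW) hp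

theorem artinMonomial_mem_span {a b : ℕ} (ha : a < 3) (hb : b < 2) :
    X 0 ^ a * X 1 ^ b ∈ 𝔐 :=
  Submodule.subset_span ⟨(⟨a, ha⟩, ⟨b, hb⟩), rfl⟩

theorem mul_mem_span_of_forall_mul_artinMonomial_mem {q : RR3}
    (h : ∀ a < 3, ∀ b < 2, q * (X 0 ^ a * X 1 ^ b) ∈ 𝔐) {p : RR3} (hp : p ∈ 𝔐) :
    q * p ∈ 𝔐 := by
  refine Submodule.mul_mem_span_of_forall_mul_mem ?_ hp
  rintro _ ⟨⟨a, b⟩, rfl⟩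
  exact h a a.isLt b b.isLt

theorem X_zero_mul_mem_span {p : RR3} (hp : p ∈ 𝔐) : X 0 * p ∈ 𝔐 := by
  refine mul_mem_span_of_forall_mul_artinMonomial_mem (fun a ha b hb => ?_) hp
  by_cases ha' : a + 1 < 3
  · simpa [pow_succ, mul_assoc, mul_comm, mul_left_comm] using artinMonomial_mem_span ha' hb
  obtain rfl : a = 2 := by omega
  have h : X 0 * (X 0 ^ 2 * X 1 ^ b) = e₁ * (X 0 ^ 2 * X 1 ^ b)
      - e₂ * (X 0 ^ 1 * X 1 ^ b) + e₃ * (X 0 ^ 0 * X 1 ^ b) := by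
    linear_combination X 1 ^ b * X_zero_pow_three
  rw [h]
  exact add_mem (sub_mem (coe_mul_mem_span e₁_mem_RW (artinMonomial_mem_span ha hb))
    (coe_mul_mem_span e₂_mem_RW (artinMonomial_mem_span (by omega) hb)))
    (coe_mul_mem_span e₃_mem_RW (artinMonomial_mem_span (by omega) hb))

theorem X_one_mul_mem_span {p : RR3} (hp : p ∈ 𝔐) : X 1 * p ∈ 𝔐 := by
  refine mul_mem_span_of_forall_mul_artinMonomial_mem (fun a ha b hb => ?_) hp
  have hx : X 0 ^ a * X 1 ^ 0 ∈ 𝔐 := artinMonomial_mem_span ha (by omega)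
  have hxy : X 0 ^ a * X 1 ^ 1 ∈ 𝔐 := artinMonomial_mem_span ha (by omega)
  obtain rfl | rfl : b = 0 ∨ b = 1 := by omega
  · simpa [mul_comm] using hxy
  have h : X 1 * (X 0 ^ a * X 1 ^ 1) = e₁ * (X 0 ^ a * X 1 ^ 1) - X 0 * (X 0 ^ a * X 1 ^ 1)
      - e₂ * (X 0 ^ a * X 1 ^ 0) + e₁ * (X 0 * (X 0 ^ a * X 1 ^ 0))
      - X 0 * (X 0 * (X 0 ^ a * X 1 ^ 0)) := by
    linear_combination X 0 ^ a * X_one_sq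
  rw [h]
  exact sub_mem (add_mem (sub_mem (sub_mem (coe_mul_mem_span e₁_mem_RW hxy)
    (X_zero_mul_mem_span hxy)) (coe_mul_mem_span e₂_mem_RW hx))
    (coe_mul_mem_span e₁_mem_RW (X_zero_mul_mem_span hx)))
    (X_zero_mul_mem_span (X_zero_mul_mem_span hx))

theorem mem_span_artinMonomial (p : RR3) : p ∈ 𝔐 := by
  induction p using MvPolynomial.induction_on with
  | C r =>
    simpa using coe_mul_mem_span (RW.algebraMap_mem r)
      (artinMonomial_mem_span (a := 0) (b := 0) (by omega) (by omega))
  | add p q hp hq => exact add_mem hp hq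
  | mul_X p i hp =>
    rw [mul_comm]
    obtain rfl | rfl | rfl : i = 0 ∨ i = 1 ∨ i = 2 := by omega
    · exact X_zero_mul_mem_span hp
    · exact X_one_mul_mem_span hp
    · rw [X_two_eq, sub_mul, sub_mul]
      exact sub_mem (sub_mem (coe_mul_mem_span e₁_mem_RW hp) (X_zero_mul_mem_span hp))
        (X_one_mul_mem_span hp)

theorem coeffs_eq_zero_of_quadratic_in_X_zero {c₀ c₁ c₂ : RR3} (h₀ : c₀ ∈ RW) (h₁ : c₁ ∈ RW)
    (h₂ : c₂ ∈ RW) (h : c₀ + c₁ * X 0 + c₂ * X 0 ^ 2 = 0) : c₀ = 0 ∧ c₁ = 0 ∧ c₂ = 0 := by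
  have root (i : Fin 3) : c₀ + c₁ * X i + c₂ * X i ^ 2 = 0 := by
    simpa [rename_eq_self_of_mem_RW, h₀, h₁, h₂, rename_X] using congrArg (rename (swap 0 i)) h
  exact coeffs_eq_zero_of_quadratic_three_roots (X_injective.ne (by decide))
    (X_injective.ne (by decide)) (X_injective.ne (by decide)) (root 0) (root 1) (root 2)

theorem linearIndependent_artinMonomial : LinearIndependent RW artinMonomial := by
  rw [Fintype.linearIndependent_iff]
  intro c hc
  simp only [Fintype.sum_prod_type, Fin.sum_univ_three, Fin.sum_univ_two, artinMonomial,
    Subalgebra.smul_def, smul_eq_mul, Fin.val_zero, Fin.val_one, Fin.val_two, pow_zero,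
    pow_one, mul_one] at hc
  have hy : ((c (0, 0) : RR3) + (c (1, 0) : RR3) * X 0 + (c (2, 0) : RR3) * X 0 ^ 2)
      + ((c (0, 1) : RR3) + (c (1, 1) : RR3) * X 0 + (c (2, 1) : RR3) * X 0 ^ 2) * X 1
      = 0 := by
    linear_combination hc
  have hinv (i : Fin 3 × Fin 2) : rename (swap (1 : Fin 3) 2) (c i : RR3) = c i :=
    rename_eq_self_of_mem_RW (c i).2 _
  have hz : ((c (0, 0) : RR3) + (c (1, 0) : RR3) * X 0 + (c (2, 0) : RR3) * X 0 ^ 2)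
      + ((c (0, 1) : RR3) + (c (1, 1) : RR3) * X 0 + (c (2, 1) : RR3) * X 0 ^ 2) * X 2
      = 0 := by
    simpa [hinv, rename_X, swap_apply_of_ne_of_ne] using
      congrArg (rename (swap (1 : Fin 3) 2)) hy
  obtain ⟨hP, hQ⟩ :=
    coeffs_eq_zero_of_linear_two_roots (X_injective.ne (by decide : (1 : Fin 3) ≠ 2)) hy hz
  obtain ⟨h00, h10, h20⟩ := coeffs_eq_zero_of_quadratic_in_X_zero (c _).2 (c _).2 (c _).2 hP
  obtain ⟨h01, h11, h21⟩ := coeffs_eq_zero_of_quadratic_in_X_zero (c _).2 (c _).2 (c _).2 hQ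
  rintro ⟨a, b⟩
  fin_cases a <;> fin_cases b <;> exact Subtype.ext ‹_›

theorem isHomogeneous_artinMonomial (i : Fin 3 × Fin 2) :
    (artinMonomial i).IsHomogeneous (i.1 + i.2) :=
  (isHomogeneous_X_pow _ _).mul (isHomogeneous_X_pow _ _)

def IsSimpleWord (l : List (Perm (Fin 3))) : Prop :=
  ∀ x ∈ l, x = swap 0 1 ∨ x = swap 1 2

-- `w 0` counts the inversions `(0, j)` of `w`, the second entry the inversion `(1, 2)`.
noncomputable def lehmerCode : Perm (Fin 3) ≃ Fin 3 × Fin 2 :=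
  Equiv.ofBijective (fun w => (w 0, if w 2 < w 1 then 1 else 0)) (by decide)

noncomputable def inversionCount (w : Perm (Fin 3)) : ℕ := (lehmerCode w).1 + (lehmerCode w).2

theorem inversionCount_mul_le {a : Perm (Fin 3)} (ha : a = swap 0 1 ∨ a = swap 1 2)
    (σ : Perm (Fin 3)) : inversionCount (a * σ) ≤ inversionCount σ + 1 := by
  revert σ; rcases ha with rfl | rfl <;> decide

theorem exists_inversionCount_mul_add_one {σ : Perm (Fin 3)} (hσ : σ ≠ 1) :
    ∃ a, (a = swap 0 1 ∨ a = swap 1 2) ∧ inversionCount (a * σ) + 1 = inversionCount σ := by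
  revert σ; decide

theorem inversionCount_prod_le {l : List (Perm (Fin 3))} (hl : IsSimpleWord l) :
    inversionCount l.prod ≤ l.length := by
  induction l with
  | nil => decide
  | cons a l ih =>
    rw [List.prod_cons, List.length_cons]
    exact (inversionCount_mul_le (hl a List.mem_cons_self) _).trans
      (Nat.add_le_add_right (ih fun x hx => hl x (List.mem_cons_of_mem a hx)) 1)

theorem exists_simpleWord (σ : Perm (Fin 3)) :
    ∃ l, IsSimpleWord l ∧ l.length = inversionCount σ ∧ l.prod = σ := by
  induction hn : inversionCount σ using Nat.strong_induction_on generalizing σ with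
  | _ n ih =>
    by_cases hσ : σ = 1
    · subst hσ
      exact ⟨[], by simp [IsSimpleWord], by rw [← hn]; decide, rfl⟩
    obtain ⟨a, ha, hlen⟩ := exists_inversionCount_mul_add_one hσ
    obtain ⟨l, hl, hlen', hprod⟩ := ih _ (by omega) (a * σ) rfl
    refine ⟨a :: l, ?_, by simp [hlen', hlen, hn], ?_⟩
    · rintro x (_ | ⟨_, hx⟩)
      exacts [ha, hl x hx]
    · rcases ha with rfl | rfl <;> simp [hprod, swap_mul_self_mul]

theorem coxLen_eq_inversionCount (w : Perm (Fin 3)) : coxLen w = inversionCount w := by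
  obtain ⟨l, hl, hlen, rfl⟩ := exists_simpleWord w
  refine le_antisymm (hlen ▸ Nat.sInf_le ⟨l, rfl, hl, rfl⟩) (le_csInf ⟨_, l, rfl, hl, rfl⟩ ?_)
  rintro _ ⟨l', rfl, hl', hprod⟩
  exact hprod ▸ inversionCount_prod_le hl'

/-- With `R = ℝ[x,y,z]` and `W = S₃` permuting the variables, there is
an isomorphism of graded `R^W`-modules `R ≅ ⊕_{w ∈ S₃} R^W(-2ℓ(w))`: explicitly, `R` is
free of rank `6` over `R^W`, with a homogeneous basis indexed by `S₃` in which the basis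
element indexed by `w` has paper degree `2ℓ(w)` (i.e. is homogeneous of standard degree
`ℓ(w)`), matching the Poincaré polynomial of `S₃`. -/
theorem R_free_over_invariants :
    Nat.card (Equiv.Perm (Fin 3)) = 6 ∧
    ∃ bas : Module.Basis (Equiv.Perm (Fin 3)) RW RR3,
      ∀ w : Equiv.Perm (Fin 3), (bas w).IsHomogeneous (coxLen w) := by
  refine ⟨by rw [Nat.card_perm, Nat.card_fin]; rfl,
    (Module.Basis.mk linearIndependent_artinMonomial fun p _ => mem_span_artinMonomial p).reindex
      lehmerCode.symm, fun w => ?_⟩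
  rw [Module.Basis.reindex_apply, Equiv.symm_symm, Module.Basis.mk_apply,
    coxLen_eq_inversionCount]
  exact isHomogeneous_artinMonomial _
end
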